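/- arXiv:0811.4343 — 6 statements merged into one kernel-verified Lean document; each statement's English description precedes it below -/
import Mathlib

section
/- Second-order discrete chain rule: for any functions g : Z → X, f : X → Y, point x ∈ Z and vectors v_1, v_2 ∈ Z, Δ_{v_1}Δ_{v_2}(f ∘ g)(x) = Δ_{Δ_{v_1}Δ_{v_2} g(x)} f(g(x) + Δ_{v_1} g(x) + Δ_{v_2} g(x)) + Δ²_{Δ_{v_1} g(x), Δ_{v_2} g(x)} f(g(x)), where Δ²_{a,b} f = Δ_a Δ_b f. -/
/-- The finite difference operator along a vector `w`. -/
def delta {X Y : Type*} [AddCommGroup X] [AddCommGroup Y] (w : X) (f : X → Y) : X → Y :=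
  fun x => f (x + w) - f x

/-- Second-order discrete chain rule:
`Δ_{v₁}Δ_{v₂}(f∘g)(x) = Δ_{Δ_{v₁}Δ_{v₂}g(x)} f(g(x)+Δ_{v₁}g(x)+Δ_{v₂}g(x))
  + Δ²_{Δ_{v₁}g(x),Δ_{v₂}g(x)} f(g(x))`. -/
theorem discrete_chain_rule_two {Z X Y : Type*} [AddCommGroup Z] [AddCommGroup X]
    [AddCommGroup Y] (g : Z → X) (f : X → Y) (x : Z) (v₁ v₂ : Z) :
    delta v₁ (delta v₂ (f ∘ g)) x =
      delta (delta v₁ (delta v₂ g) x) f (g x + delta v₁ g x + delta v₂ g x)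
        + delta (delta v₁ g x) (delta (delta v₂ g x) f) (g x) := by
  simp only [delta, Function.comp]
  have h1 : g x + (g (x + v₁) - g x) + (g (x + v₂) - g x) +
      (g (x + v₁ + v₂) - g (x + v₁) - (g (x + v₂) - g x)) = g (x + v₁ + v₂) := by abel
  have h3 : g x + (g (x + v₂) - g x) = g (x + v₂) := by abel
  have h4 : g x + (g (x + v₁) - g x) = g (x + v₁) := by abel
  rw [h1, h3, h4]
  abel
end

section
/- Third-order discrete chain rule: for functions g : Z → X, f : X → Y, x ∈ Z, v_1,v_2,v_3 ∈ Z, writing g_i = Δ_{v_i}g(x), g_{ij} = Δ_{v_i}Δ_{v_j}g(x), g_{123} = Δ_{v_1}Δ_{v_2}Δ_{v_3}g(x), one has Δ_{v_1}Δ_{v_2}Δ_{v_3}(f∘g)(x) = Δ_{g_{123}} f(g(x)+g_1+g_2+g_3+g_{12}+g_{13}+g_{23}) + Δ²_{g_{23}, g_1} f(g(x)+g_2+g_3) + Δ²_{g_{13}, g_2+g_{23}} f(g(x)+g_1+g_3) + Δ²_{g_{12}, g_3+g_{13}+g_{23}} f(g(x)+g_1+g_2) + Δ³_{g_1,g_2,g_3}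 f(g(x)). -/
/-- Third-order discrete chain rule. -/
theorem discrete_chain_rule_three {Z X Y : Type*} [AddCommGroup Z] [AddCommGroup X]
    [AddCommGroup Y] (g : Z → X) (f : X → Y) (x : Z) (v₁ v₂ v₃ : Z) :
    delta v₁ (delta v₂ (delta v₃ (f ∘ g))) x =
      delta (delta v₁ (delta v₂ (delta v₃ g)) x) f
          (g x + delta v₁ g x + delta v₂ g x + delta v₃ g x
            + delta v₁ (delta v₂ g) x + delta v₁ (delta v₃ g) x + delta v₂ (delta v₃ g) x)
        + delta (delta v₂ (delta v₃ g) x) (delta (delta v₁ g x) f)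
            (g x + delta v₂ g x + delta v₃ g x)
        + delta (delta v₁ (delta v₃ g) x)
            (delta (delta v₂ g x + delta v₂ (delta v₃ g) x) f)
            (g x + delta v₁ g x + delta v₃ g x)
        + delta (delta v₁ (delta v₂ g) x)
            (delta (delta v₃ g x + delta v₁ (delta v₃ g) x + delta v₂ (delta v₃ g) x) f)
            (g x + delta v₁ g x + delta v₂ g x)
        + delta (delta v₁ g x) (delta (delta v₂ g x) (delta (delta v₃ g x) f)) (g x) := by
  simp only [delta, Function.comp]
  generalize g (x + v₁ + v₂ + v₃) = d
  generalize g (x + v₁ + v₂) = c12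
  generalize g (x + v₁ + v₃) = c13
  generalize g (x + v₂ + v₃) = c23
  generalize g (x + v₁) = b1
  generalize g (x + v₂) = b2
  generalize g (x + v₃) = b3
  generalize g x = a
  rw [show a + (b1 - a) + (b2 - a) + (b3 - a) + (c12 - b1 - (b2 - a)) + (c13 - b1 - (b3 - a)) + (c23 - b2 - (b3 - a)) + (d - c12 - (c13 - b1) - (c23 - b2 - (b3 - a))) = d from by abel,
      show a + (b1 - a) + (b2 - a) + (b3 - a) + (c12 - b1 - (b2 - a)) + (c13 - b1 - (b3 - a)) + (c23 - b2 - (b3 - a)) = c12 + c13 + c23 - b1 - b2 - b3 + a from by abel,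
      show a + (b2 - a) + (b3 - a) + (c23 - b2 - (b3 - a)) + (b1 - a) = c23 + b1 - a from by abel,
      show a + (b2 - a) + (b3 - a) + (c23 - b2 - (b3 - a)) = c23 from by abel,
      show a + (b1 - a) + (b3 - a) + (c13 - b1 - (b3 - a)) + (b2 - a + (c23 - b2 - (b3 - a))) = c13 + c23 - b3 from by abel,
      show a + (b1 - a) + (b3 - a) + (c13 - b1 - (b3 - a)) = c13 from by abel,
      show a + (b1 - a) + (b3 - a) + (b2 - a + (c23 - b2 - (b3 - a))) = c23 + b1 - a from by abel,
      show a + (b1 - a) + (b2 - a) + (c12 - b1 - (b2 - a)) + (b3 - a + (c13 - b1 - (b3 - a)) + (c23 - b2 - (b3 - a))) = c12 + c13 + c23 - b1 - b2 - b3 + a from by abel,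
      show a + (b1 - a) + (b2 - a) + (c12 - b1 - (b2 - a)) = c12 from by abel,
      show a + (b1 - a) + (b2 - a) + (b3 - a + (c13 - b1 - (b3 - a)) + (c23 - b2 - (b3 - a))) = c13 + c23 - b3 from by abel,
      show a + (b1 - a) + (b2 - a) + (b3 - a) = b1 + b2 + b3 - a - a from by abel,
      show a + (b2 - a) + (b3 - a) + (b1 - a) = b1 + b2 + b3 - a - a from by abel,
      show a + (b1 - a) + (b3 - a) = b1 + b3 - a from by abel,
      show a + (b1 - a) + (b2 - a) = b1 + b2 - a from by abel,
      show a + (b2 - a) + (b3 - a) = b2 + b3 - a from by abel,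
      show a + (b1 - a) = b1 from by abel,
      show a + (b2 - a) = b2 from by abel,
      show a + (b3 - a) = b3 from by abel]
  abel
end

section
/- Expansion lemma for iterated differences of sums: for any function f : X → Y, point x ∈ X, vector w ∈ X, and vectors u_1,…,u_n, v_1,…,v_n ∈ X, Δⁿ_{(u_1+v_1),…,(u_n+v_n)} f(x+w) − Δⁿ_{u_1,…,u_n} f(x) = Δ^{n+1}_{w, u_1, …, u_n} f(x) + Σ_{i=1}^{n} Δⁿ_{u_1,…,u_{i−1}, v_i, (u_{i+1}+v_{i+1}),…,(u_n+v_n)} f(x + w + u_i). -/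
/-- Iterated finite difference `Δⁿ_{w₁,…,wₙ} = Δ_{w₁} ∘ ⋯ ∘ Δ_{wₙ}`. -/
def deltaN {X Y : Type*} [AddCommGroup X] [AddCommGroup Y] :
    (n : ℕ) → (Fin n → X) → (X → Y) → (X → Y)
  | 0, _, f => f
  | n + 1, w, f => delta (w 0) (deltaN n (fun i => w i.succ) f)

/-- Expansion lemma for iterated differences of sums:
`Δⁿ_{(u₁+v₁),…,(uₙ+vₙ)} f(x+w) − Δⁿ_{u₁,…,uₙ} f(x) = Δ^{n+1}_{w,u₁,…,uₙ} f(x)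
  + ∑_{i=1}^{n} Δⁿ_{u₁,…,u_{i−1}, vᵢ, (u_{i+1}+v_{i+1}),…,(uₙ+vₙ)} f(x+w+uᵢ)`. -/
theorem deltaN_expansion {X Y : Type*} [AddCommGroup X] [AddCommGroup Y]
    (f : X → Y) (n : ℕ) (x w : X) (u v : Fin n → X) :
    deltaN n (fun j => u j + v j) f (x + w) - deltaN n u f x =
      deltaN (n + 1) (Fin.cons w u) f x
        + ∑ i : Fin n,
            deltaN n (fun j => if j < i then u j else if j = i then v j else u j + v j)
              f (x + w + u i) := by
  induction n generalizing x w with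
  | zero => simp [deltaN, delta]
  | succ n ih =>
    have key : ∀ (y z : X), deltaN n (fun j => u j.succ + v j.succ) f (y + z) =
        deltaN n (fun j => u j.succ) f (y + z)
          + ∑ i : Fin n, deltaN n
              (fun j => if j < i then u j.succ else if j = i then v j.succ
                else u j.succ + v j.succ) f (y + z + u i.succ) := by
      intro y z
      have h := ih y z (fun j => u j.succ) (fun j => v j.succ)
      simp only [deltaN, delta, Fin.cons_zero, Fin.cons_succ] at h
      rw [sub_eq_iff_eq_add] at h
      rw [h]; abel
    simp only [deltaN, delta, Fin.sum_univ_succ, Fin.cons_zero, Fin.cons_succ,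
      Fin.succ_pos, Fin.not_lt_zero, Fin.succ_ne_zero, Fin.succ_lt_succ_iff,
      Fin.succ_inj, if_true, if_false, ite_true, ite_false]
    rw [show x + w + (u 0 + v 0) = x + (w + u 0 + v 0) by abel,
        show x + w + u 0 + v 0 = x + (w + u 0 + v 0) by abel,
        show x + w + u 0 = x + (w + u 0) by abel,
        show x + w = x + (w + 0) by abel,
        key x (w + u 0 + v 0), key x (w + 0), key x (w + u 0)]
    have hsum : ∀ i : Fin n, x + (w + 0) + u i.succ + u 0 = x + (w + u 0) + u i.succ := by
      intro i; abel
    simp only [hsum, Finset.sum_sub_distrib]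
    abel
end

section
/- Smooth Faà di Bruno with cube multi-indices: let f : X → Y and g : Z → X be smooth maps between real finite-dimensional vector spaces, x ∈ Z, u = (u_1,…,u_k) ∈ Z^k, and α ∈ {0,1}^k with α = (1,…,1). Then D_u^α(f∘g)(x) = Σ over partitions {α¹,…,αⁿ} of α of Dⁿ f_{g(x)}(D_u^{α¹} g(x), …, D_u^{αⁿ} g(x)), where D_u^β denotes the iterated directional derivative along the u_i with β_i = 1, and Dⁿf_{g(x)} is the n-th derivative as a symmetric n-multilinear map. -/
open scoped Classical

/-- Iterated directional derivative `D_u^α = (D_{u_1})^{α_1} ∘ ⋯ ∘ (D_{u_k})^{α_k}`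
for a multi-index `α ∈ {0,1}^k`. -/
noncomputable def dIter {Z Y : Type*} [NormedAddCommGroup Z] [NormedSpace ℝ Z]
    [NormedAddCommGroup Y] [NormedSpace ℝ Y] :
    (k : ℕ) → (Fin k → Z) → (Fin k → Bool) → (Z → Y) → (Z → Y)
  | 0, _, _, f => f
  | k + 1, u, α, f =>
    let rest := dIter k (fun i => u i.succ) (fun i => α i.succ) f
    if α 0 then (fun x => fderiv ℝ rest x (u 0)) else rest

/-- The indicator of a subset of `Fin k` in `ℕ^k`. -/
def ind {k : ℕ} (s : Finset (Fin k)) : Fin k → ℕ := fun i => if i ∈ s then 1 else 0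

open scoped ContDiff


section Sym
variable {E F : Type*} [NormedAddCommGroup E] [NormedSpace ℝ E]
  [NormedAddCommGroup F] [NormedSpace ℝ F]

theorem my_iter_congr (f : E → F) {N N' : ℕ} (h : N = N') (x : E)
    (v : Fin N → E) (v' : Fin N' → E) (hv : ∀ i : Fin N', v (Fin.cast h.symm i) = v' i) :
    iteratedFDeriv ℝ N f x v = iteratedFDeriv ℝ N' f x v' := by
  subst h
  congr 1
  funext i
  exact hv i

theorem my_iter_congr' (f : E → F) {N N' : ℕ} (h : N = N') (x : E)
    (v : Fin N → E) (v' : Fin N' → E) (hv : ∀ i : Fin N, v i = v' (Fin.cast h i)) :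
    iteratedFDeriv ℝ N f x v = iteratedFDeriv ℝ N' f x v' := by
  subst h
  congr 1
  funext i
  exact hv i

theorem my_fderiv_eval {n : ℕ} (G : E → ContinuousMultilinearMap ℝ (fun _ : Fin n => E) F)
    (hG : Differentiable ℝ G) (x w : E) (v : Fin n → E) :
    fderiv ℝ (fun y => G y v) x w = fderiv ℝ G x w v := by
  have h : (fun y => G y v) = (ContinuousMultilinearMap.apply ℝ (fun _ : Fin n => E) F v) ∘ G := rfl
  rw [h, ((ContinuousMultilinearMap.apply ℝ (fun _ : Fin n => E) F v).hasFDerivAt.comp x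
    (hG x).hasFDerivAt).fderiv]
  rfl

theorem my_fderiv_eval2 {n : ℕ}
    (H : E → (E →L[ℝ] ContinuousMultilinearMap ℝ (fun _ : Fin n => E) F))
    (hH : Differentiable ℝ H) (x w a : E) (v : Fin n → E) :
    fderiv ℝ (fun y => H y a v) x w = fderiv ℝ H x w a v := by
  have h : (fun y => H y a v) =
      ((ContinuousMultilinearMap.apply ℝ (fun _ : Fin n => E) F v).comp
        (ContinuousLinearMap.apply ℝ (ContinuousMultilinearMap ℝ (fun _ : Fin n => E) F) a)) ∘ H :=
    rfl
  rw [h, (((ContinuousMultilinearMap.apply ℝ (fun _ : Fin n => E) F v).comp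
    (ContinuousLinearMap.apply ℝ (ContinuousMultilinearMap ℝ (fun _ : Fin n => E) F) a)).hasFDerivAt.comp
    x (hH x).hasFDerivAt).fderiv]
  rfl

theorem my_symm {f : E → F} (hf : ContDiff ℝ (⊤ : ℕ∞) f) :
    ∀ (n : ℕ) (σ : Equiv.Perm (Fin n)) (x : E) (m : Fin n → E),
      iteratedFDeriv ℝ n f x (m ∘ σ) = iteratedFDeriv ℝ n f x m := by
  have hD : ∀ j : ℕ, Differentiable ℝ (iteratedFDeriv ℝ j f) := by
    intro j
    exact hf.differentiable_iteratedFDeriv (by exact_mod_cast WithTop.coe_lt_top _)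
  intro n
  induction n with
  | zero =>
    intro σ x m
    congr 1
    funext i
    exact i.elim0
  | succ n IH =>
    have tailP : ∀ (τ : Equiv.Perm (Fin n)) (x : E) (m : Fin (n+1) → E),
        iteratedFDeriv ℝ (n+1) f x (Fin.cons (m 0) (Fin.tail m ∘ τ)) =
          iteratedFDeriv ℝ (n+1) f x m := by
      intro τ x m
      rw [iteratedFDeriv_succ_apply_left, iteratedFDeriv_succ_apply_left]
      simp only [Fin.cons_zero, Fin.tail_cons]
      rw [← my_fderiv_eval _ (hD n), ← my_fderiv_eval _ (hD n)]
      have h : (fun y => iteratedFDeriv ℝ n f y (Fin.tail m ∘ τ)) =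
          (fun y => iteratedFDeriv ℝ n f y (Fin.tail m)) := by
        funext y
        exact IH τ y (Fin.tail m)
      rw [h]
    rcases n with - | n'
    · -- arity 1 : all perms trivial
      intro σ x m
      have hσ : m ∘ σ = m := by
        funext i
        have h1 := (σ i).isLt
        have h2 := i.isLt
        have h3 : σ i = i := Fin.ext (by omega)
        show m (σ i) = m i
        rw [h3]
      rw [hσ]
    set n := n' + 1 with hn
    set P : Equiv.Perm (Fin (n+1)) → Prop :=
      fun σ => ∀ (x : E) (m : Fin (n+1) → E),
        iteratedFDeriv ℝ (n+1) f x (m ∘ σ) = iteratedFDeriv ℝ (n+1) f x m with hP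
    have hone : P 1 := by
      intro x m
      simp
    have hmul : ∀ σ τ, P σ → P τ → P (σ * τ) := by
      intro σ τ hσ hτ x m
      have h : m ∘ (σ * τ) = (m ∘ σ) ∘ τ := rfl
      rw [h, hτ, hσ]
    have hswap_succ : ∀ a b : Fin n, P (Equiv.swap a.succ b.succ) := by
      intro a b x m
      have hsw : ∀ j : Fin n, Equiv.swap a.succ b.succ j.succ = (Equiv.swap a b j).succ := by
        intro j
        rcases eq_or_ne j a with rfl | hja
        · rw [Equiv.swap_apply_left, Equiv.swap_apply_left]
        · rcases eq_or_ne j b with rfl | hjb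
          · rw [Equiv.swap_apply_right, Equiv.swap_apply_right]
          · rw [Equiv.swap_apply_of_ne_of_ne hja hjb,
              Equiv.swap_apply_of_ne_of_ne (fun h => hja (Fin.succ_injective _ h))
                (fun h => hjb (Fin.succ_injective _ h))]
      have h1 : m ∘ (Equiv.swap a.succ b.succ) = Fin.cons (m 0) (Fin.tail m ∘ Equiv.swap a b) := by
        funext i
        refine Fin.cases ?_ (fun j => ?_) i
        · show m (Equiv.swap a.succ b.succ 0) = m 0
          rw [Equiv.swap_apply_of_ne_of_ne (Fin.succ_ne_zero a).symm (Fin.succ_ne_zero b).symm]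
        · show m (Equiv.swap a.succ b.succ j.succ) = (Fin.tail m ∘ Equiv.swap a b) j
          rw [hsw]
          rfl
      rw [h1]
      exact tailP _ x m
    have hswap01 : P (Equiv.swap 0 1) := by
      have hH : Differentiable ℝ (fderiv ℝ (iteratedFDeriv ℝ n' f)) := by
        have h1 : ContDiff ℝ (⊤ : ℕ∞) (iteratedFDeriv ℝ n' f) :=
          hf.iteratedFDeriv_right (by exact_mod_cast le_top)
        exact (h1.fderiv_right (m := (⊤ : ℕ∞)) (le_of_eq rfl)).differentiable
          (by simp)
      have key : ∀ (x : E) (m : Fin (n+1) → E),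
          iteratedFDeriv ℝ (n+1) f x m =
            fderiv ℝ (fderiv ℝ (iteratedFDeriv ℝ n' f)) x (m 0) (m 1)
              (Fin.tail (Fin.tail m)) := by
        intro x m
        rw [iteratedFDeriv_succ_apply_left,
          ← my_fderiv_eval _ (hD (n'+1)) x (m 0) (Fin.tail m)]
        have h : (fun y => iteratedFDeriv ℝ (n'+1) f y (Fin.tail m)) =
            (fun y => fderiv ℝ (iteratedFDeriv ℝ n' f) y (m 1) (Fin.tail (Fin.tail m))) := by
          funext y
          rw [iteratedFDeriv_succ_apply_left]
          rfl
        rw [h, my_fderiv_eval2 _ hH]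
      intro x m
      rw [key, key]
      have hsym := second_derivative_symmetric (f := iteratedFDeriv ℝ n' f)
        (f' := fderiv ℝ (iteratedFDeriv ℝ n' f))
        (f'' := fderiv ℝ (fderiv ℝ (iteratedFDeriv ℝ n' f)) x) (x := x)
        (fun y => ((hD n') y).hasFDerivAt) ((hH x).hasFDerivAt) (m 1) (m 0)
      have e0 : (m ∘ (Equiv.swap 0 1)) 0 = m 1 := by simp
      have e1 : (m ∘ (Equiv.swap 0 1)) 1 = m 0 := by simp
      have erest : Fin.tail (Fin.tail (m ∘ (Equiv.swap 0 1))) = Fin.tail (Fin.tail m) := by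
        funext j
        have hne1 : j.succ.succ ≠ (1 : Fin (n+1)) := by
          intro h
          have h2 := congrArg Fin.val h
          simp only [Fin.val_succ, Fin.val_one] at h2
          omega
        show m (Equiv.swap 0 1 j.succ.succ) = m j.succ.succ
        rw [Equiv.swap_apply_of_ne_of_ne (Fin.succ_ne_zero _) hne1]
      rw [e0, e1, erest, hsym]
    have hsucc_eq_one : (Fin.succ (0 : Fin n)) = (1 : Fin (n+1)) := rfl
    have hswap0 : ∀ j : Fin (n+1), j ≠ 0 → P (Equiv.swap 0 j) := by
      intro j hj
      obtain ⟨t, rfl⟩ := Fin.exists_succ_eq.2 hj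
      rcases eq_or_ne t 0 with rfl | ht
      · rw [hsucc_eq_one]
        exact hswap01
      · have h := Equiv.swap_apply_apply (Equiv.swap (Fin.succ (0:Fin n)) t.succ)
          (0 : Fin (n+1)) (Fin.succ (0:Fin n))
        rw [Equiv.swap_apply_of_ne_of_ne (fun h => Fin.succ_ne_zero _ h.symm)
          (fun h => Fin.succ_ne_zero _ h.symm), Equiv.swap_apply_left, Equiv.swap_inv] at h
        rw [h]
        refine hmul _ _ (hmul _ _ (hswap_succ _ _) ?_) (hswap_succ _ _)
        rw [hsucc_eq_one]
        exact hswap01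
    have hswap : ∀ p q : Fin (n+1), p ≠ q → P (Equiv.swap p q) := by
      intro p q hpq
      rcases eq_or_ne p 0 with rfl | hp
      · exact hswap0 q (Ne.symm hpq)
      · rcases eq_or_ne q 0 with rfl | hq
        · rw [Equiv.swap_comm]
          exact hswap0 p hp
        · obtain ⟨a, rfl⟩ := Fin.exists_succ_eq.2 hp
          obtain ⟨b, rfl⟩ := Fin.exists_succ_eq.2 hq
          exact hswap_succ a b
    intro σ
    refine Equiv.Perm.swap_induction_on σ hone ?_
    intro g p q hpq hg
    exact hmul _ _ (hswap p q hpq) hg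
end Sym

section Part2
open scoped Classical ContDiff

def sel : (k : ℕ) → (Fin k → Bool) → List (Fin k)
  | 0, _ => []
  | k+1, α =>
    if α 0 then (0 : Fin (k+1)) :: (sel k (fun i => α i.succ)).map Fin.succ
    else (sel k (fun i => α i.succ)).map Fin.succ

theorem sel_mem : ∀ (k : ℕ) (α : Fin k → Bool) (i : Fin k), i ∈ sel k α ↔ α i = true := by
  intro k
  induction k with
  | zero => intro α i; exact i.elim0
  | succ k IH =>
    intro α i
    rw [sel]
    refine Fin.cases ?_ (fun j => ?_) i
    · by_cases h : α 0 = true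
      · rw [if_pos h, h]
        simp
      · rw [if_neg h]
        simp only [List.mem_map, iff_false_intro h, iff_false]
        rintro ⟨a, -, ha⟩
        exact Fin.succ_ne_zero a ha
    · by_cases h : α 0 = true
      · rw [if_pos h]
        simp only [List.mem_cons, List.mem_map]
        constructor
        · rintro (hh | ⟨a, ha, haa⟩)
          · exact absurd hh (Fin.succ_ne_zero j)
          · rw [← Fin.succ_injective _ haa]
            exact (IH _ a).1 ha
        · intro hh
          exact Or.inr ⟨j, (IH _ j).2 hh, rfl⟩
      · rw [if_neg h]
        simp only [List.mem_map]
        constructor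
        · rintro ⟨a, ha, haa⟩
          rw [← Fin.succ_injective _ haa]
          exact (IH _ a).1 ha
        · intro hh
          exact ⟨j, (IH _ j).2 hh, rfl⟩

theorem sel_sorted : ∀ (k : ℕ) (α : Fin k → Bool), (sel k α).Pairwise (· < ·) := by
  intro k
  induction k with
  | zero => intro α; simp [sel]
  | succ k IH =>
    intro α
    have hmap : ((sel k (fun i => α i.succ)).map Fin.succ).Pairwise (· < ·) :=
      List.Pairwise.map Fin.succ (fun a b hab => Fin.succ_lt_succ_iff.2 hab) (IH _)
    rw [sel]
    by_cases h : α 0 = true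
    · rw [if_pos h]
      refine List.pairwise_cons.2 ⟨?_, hmap⟩
      intro b hb
      rcases List.mem_map.1 hb with ⟨a, -, rfl⟩
      exact Fin.succ_pos a
    · rw [if_neg h]
      exact hmap

theorem sel_nodup (k : ℕ) (α : Fin k → Bool) : (sel k α).Nodup :=
  (sel_sorted k α).nodup

theorem sel_length (k : ℕ) (α : Fin k → Bool) :
    (sel k α).length = (Finset.univ.filter (fun i => α i = true)).card := by
  classical
  rw [← List.toFinset_card_of_nodup (sel_nodup k α)]
  congr 1
  ext i
  simp [sel_mem]

theorem sel_get_mem (k : ℕ) (α : Fin k → Bool) (j : Fin (sel k α).length) :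
    α ((sel k α).get j) = true :=
  (sel_mem k α _).1 (List.get_mem _ j)

theorem sel_get_strictMono (k : ℕ) (α : Fin k → Bool) : StrictMono (sel k α).get :=
  (sel_sorted k α).sortedLT.strictMono_get

end Part2

section Part3
open scoped Classical ContDiff

variable {E F : Type*} [NormedAddCommGroup E] [NormedSpace ℝ E]
  [NormedAddCommGroup F] [NormedSpace ℝ F]

theorem dIter_eq (h : E → F) (hh : ContDiff ℝ (⊤ : ℕ∞) h) :
    ∀ (k : ℕ) (u : Fin k → E) (α : Fin k → Bool) (x : E),
      dIter k u α h x =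
        iteratedFDeriv ℝ (sel k α).length h x (fun j => u ((sel k α).get j)) := by
  have hD : ∀ j : ℕ, Differentiable ℝ (iteratedFDeriv ℝ j h) := by
    intro j
    exact hh.differentiable_iteratedFDeriv (by exact_mod_cast WithTop.coe_lt_top _)
  intro k
  induction k with
  | zero =>
    intro u α x
    rw [dIter, sel]
    exact (iteratedFDeriv_zero_apply _).symm
  | succ k IH =>
    intro u α x
    set α' : Fin k → Bool := fun i => α i.succ with hα'
    set u' : Fin k → E := fun i => u i.succ with hu'
    set l := sel k α' with hl
    have hrest : (dIter k u' α' h) =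
        (fun y => iteratedFDeriv ℝ l.length h y (fun j => u' (l.get j))) :=
      funext (fun y => IH u' α' y)
    by_cases h0 : α 0 = true
    · have hsel : sel (k+1) α = (0 : Fin (k+1)) :: l.map Fin.succ := by
        rw [sel, if_pos h0]
      have hd : dIter (k+1) u α h x = fderiv ℝ (dIter k u' α' h) x (u 0) := by
        rw [dIter]
        simp only [h0, if_true]; rfl
      rw [hd, hrest, my_fderiv_eval _ (hD l.length) x (u 0) _]
      have hleft := iteratedFDeriv_succ_apply_left (𝕜 := ℝ) (f := h) (x := x) (n := l.length)
        (Fin.cons (u 0) (fun j => u' (l.get j)))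
      rw [Fin.cons_zero, Fin.tail_cons] at hleft
      rw [← hleft, hsel]
      have hlen : l.length + 1 = ((0 : Fin (k+1)) :: l.map Fin.succ).length := by simp
      refine my_iter_congr' h hlen x _ _ (fun i => ?_)
      refine Fin.cases ?_ (fun j => ?_) i
      · rfl
      · rw [Fin.cons_succ]
        have hg : ((0 : Fin (k+1)) :: l.map Fin.succ).get (Fin.cast hlen j.succ) =
            (l.map Fin.succ).get ⟨j.1, by simpa using j.2⟩ := rfl
        rw [hg]; simp [hu']
    · have hsel : sel (k+1) α = l.map Fin.succ := by
        rw [sel, if_neg h0]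
      have hd : dIter (k+1) u α h x = dIter k u' α' h x := by
        rw [dIter]
        simp only [h0, Bool.false_eq_true, if_false]; rfl
      rw [hd, hrest, hsel]
      have hlen : l.length = (l.map Fin.succ).length := by simp
      refine my_iter_congr' h hlen x _ _ (fun j => ?_)
      have hg : (l.map Fin.succ).get (Fin.cast hlen j) =
          (l.map Fin.succ).get ⟨j.1, by simpa using j.2⟩ := rfl
      rw [hg]; simp [hu']

end Part3

section Part4
open scoped Classical ContDiff
open OrderedFinpartition

variable {E F : Type*} [NormedAddCommGroup E] [NormedSpace ℝ E]
  [NormedAddCommGroup F] [NormedSpace ℝ F]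
  {G : Type*} [NormedAddCommGroup G] [NormedSpace ℝ G]

theorem my_faa (f : F → G) (g : E → F) (hf : ContDiff ℝ (⊤ : ℕ∞) f)
    (hg : ContDiff ℝ (⊤ : ℕ∞) g) (k : ℕ) (x : E) (v : Fin k → E) :
    iteratedFDeriv ℝ k (f ∘ g) x v =
      ∑ c : OrderedFinpartition k,
        iteratedFDeriv ℝ c.length f (g x)
          (fun m => iteratedFDeriv ℝ (c.partSize m) g x (v ∘ c.emb m)) := by
  have Hf : HasFTaylorSeriesUpTo (⊤ : ℕ∞) f (ftaylorSeries ℝ f) :=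
    contDiff_iff_ftaylorSeries.1 hf
  have Hg : HasFTaylorSeriesUpTo (⊤ : ℕ∞) g (ftaylorSeries ℝ g) :=
    contDiff_iff_ftaylorSeries.1 hg
  have Hcomp : HasFTaylorSeriesUpToOn ((⊤ : ℕ∞) : WithTop ℕ∞) (f ∘ g)
      (fun y => (ftaylorSeries ℝ f (g y)).taylorComp (ftaylorSeries ℝ g y)) Set.univ :=
    HasFTaylorSeriesUpToOn.comp (Hf.hasFTaylorSeriesUpToOn Set.univ)
      (Hg.hasFTaylorSeriesUpToOn Set.univ) (Set.mapsTo_univ _ _)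
  have heq := Hcomp.eq_iteratedFDerivWithin_of_uniqueDiffOn (m := k)
    (by exact_mod_cast le_top) uniqueDiffOn_univ (Set.mem_univ x)
  rw [iteratedFDerivWithin_univ] at heq
  rw [← heq]
  rw [FormalMultilinearSeries.taylorComp]
  rw [ContinuousMultilinearMap.sum_apply]
  rfl

end Part4

section Part5
open scoped Classical ContDiff
open OrderedFinpartition

variable {k : ℕ}

noncomputable def toBlocks (c : OrderedFinpartition k) : Fin c.length → Finset (Fin k) :=
  fun m => Finset.univ.image (c.emb m)

theorem mem_toBlocks {c : OrderedFinpartition k} {m : Fin c.length} {j : Fin k} :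
    j ∈ toBlocks c m ↔ ∃ r, c.emb m r = j := by
  simp [toBlocks]

theorem toBlocks_card (c : OrderedFinpartition k) (m : Fin c.length) :
    (toBlocks c m).card = c.partSize m := by
  rw [toBlocks, Finset.card_image_of_injective _ (c.emb_strictMono m).injective,
    Finset.card_univ, Fintype.card_fin]

theorem toBlocks_nonempty (c : OrderedFinpartition k) (m : Fin c.length) :
    (toBlocks c m).Nonempty :=
  ⟨c.emb m ⟨0, c.partSize_pos m⟩, mem_toBlocks.2 ⟨_, rfl⟩⟩

theorem toBlocks_disjoint (c : OrderedFinpartition k) {m m' : Fin c.length} (h : m ≠ m') :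
    Disjoint (toBlocks c m) (toBlocks c m') := by
  rw [Finset.disjoint_left]
  intro a ha ha'
  rcases mem_toBlocks.1 ha with ⟨r, hr⟩
  rcases mem_toBlocks.1 ha' with ⟨r', hr'⟩
  exact c.emb_ne_emb_of_ne h (hr.trans hr'.symm)

theorem toBlocks_inj (c : OrderedFinpartition k) : Function.Injective (toBlocks c) := by
  intro m m' h
  by_contra hne
  rcases toBlocks_nonempty c m with ⟨a, ha⟩
  exact (Finset.disjoint_left.1 (toBlocks_disjoint c hne)) ha (h ▸ ha)

theorem index_unique (c : OrderedFinpartition k) {j : Fin k} {m : Fin c.length}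
    (h : j ∈ toBlocks c m) : m = c.index j := by
  by_contra hne
  have h2 : j ∈ toBlocks c (c.index j) := mem_toBlocks.2 ⟨c.invEmbedding j, c.emb_invEmbedding j⟩
  exact (Finset.disjoint_left.1 (toBlocks_disjoint c hne)) h h2

noncomputable def Phi (c : OrderedFinpartition k) : Finset (Finset (Fin k)) :=
  Finset.univ.image (toBlocks c)

theorem Phi_card (c : OrderedFinpartition k) : (Phi c).card = c.length := by
  rw [Phi, Finset.card_image_of_injective _ (toBlocks_inj c), Finset.card_univ, Fintype.card_fin]

theorem Phi_prop (c : OrderedFinpartition k) :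
    ∅ ∉ Phi c ∧ (∑ β ∈ Phi c, ind β) = fun _ => 1 := by
  constructor
  · intro hmem
    rcases Finset.mem_image.1 hmem with ⟨m, -, hm⟩
    rcases toBlocks_nonempty c m with ⟨a, ha⟩
    rw [hm] at ha
    exact absurd ha (Finset.notMem_empty a)
  · funext j
    rw [Finset.sum_apply]
    rw [Phi, Finset.sum_image (fun a _ b _ h => toBlocks_inj c h)]
    have : ∀ m : Fin c.length, ind (toBlocks c m) j = if m ∈ ({c.index j} : Finset (Fin c.length)) then 1 else 0 := by
      intro m
      rw [ind]
      by_cases hm : j ∈ toBlocks c m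
      · rw [if_pos hm, if_pos (Finset.mem_singleton.2 (index_unique c hm))]
      · rw [if_neg hm, if_neg]
        intro hc
        rw [Finset.mem_singleton] at hc
        subst hc
        exact hm (mem_toBlocks.2 ⟨c.invEmbedding j, c.emb_invEmbedding j⟩)
    rw [Finset.sum_congr rfl (fun m _ => this m), Finset.sum_ite_mem]
    simp

-- max of a block as ℕ
noncomputable def mx (β : Finset (Fin k)) : ℕ := β.sup (fun a => (a : ℕ))

noncomputable def keyfun (c : OrderedFinpartition k) : Fin c.length → Fin k :=
  fun m => c.emb m ⟨c.partSize m - 1, Nat.sub_one_lt_of_lt (c.partSize_pos m)⟩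

theorem keyfun_mem (c : OrderedFinpartition k) (m : Fin c.length) :
    keyfun c m ∈ toBlocks c m := mem_toBlocks.2 ⟨_, rfl⟩

theorem le_keyfun (c : OrderedFinpartition k) (m : Fin c.length) {a : Fin k}
    (ha : a ∈ toBlocks c m) : a ≤ keyfun c m := by
  rcases mem_toBlocks.1 ha with ⟨r, rfl⟩
  exact (c.emb_strictMono m).monotone (by
    rw [Fin.le_def]
    exact Nat.le_sub_one_of_lt r.2)

theorem mx_toBlocks (c : OrderedFinpartition k) (m : Fin c.length) :
    mx (toBlocks c m) = (keyfun c m : ℕ) := by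
  rw [mx]
  apply le_antisymm
  · exact Finset.sup_le (fun a ha => le_keyfun c m ha)
  · exact Finset.le_sup (f := fun a => ((a : Fin k) : ℕ)) (keyfun_mem c m)

end Part5

section Part6
open scoped Classical ContDiff
open OrderedFinpartition

variable {k : ℕ}

theorem strictMono_unique {α : Type*} [LinearOrder α] {s : Finset α} {N : ℕ} (h : s.card = N)
    {v w : Fin N → α} (hv : StrictMono v) (hw : StrictMono w)
    (hvm : ∀ i, v i ∈ s) (hwm : ∀ i, w i ∈ s) : v = w :=
  (Finset.orderEmbOfFin_unique h hvm hv).trans (Finset.orderEmbOfFin_unique h hwm hw).symm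

theorem ofp_ext (c c' : OrderedFinpartition k) (hl : c.length = c'.length)
    (hp : ∀ m, c.partSize m = c'.partSize (Fin.cast hl m))
    (he : ∀ m i, c.emb m i = c'.emb (Fin.cast hl m) (Fin.cast (hp m) i)) : c = c' := by
  obtain ⟨l, ps, pos, em, hsm, hpm, hdj, hcv⟩ := c
  obtain ⟨l', ps', pos', em', hsm', hpm', hdj', hcv'⟩ := c'
  change l = l' at hl
  subst hl
  change ∀ m, ps m = ps' m at hp
  have hps : ps = ps' := funext hp
  subst hps
  change ∀ m i, em m i = em' m i at he
  have hem : em = em' := funext (fun m => funext (fun i => he m i))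
  subst hem
  rfl

theorem keyfun_strictMono (c : OrderedFinpartition k) : StrictMono (keyfun c) :=
  c.parts_strictMono

theorem keyfun_natval_inj (c : OrderedFinpartition k) :
    Function.Injective (fun m => ((keyfun c m : ℕ))) :=
  fun a b h => (keyfun_strictMono c).injective (Fin.val_injective h)

theorem Phi_image_mx (c : OrderedFinpartition k) :
    (Phi c).image mx = Finset.univ.image (fun m => (keyfun c m : ℕ)) := by
  rw [Phi, Finset.image_image]
  exact Finset.image_congr (fun m _ => mx_toBlocks c m)

theorem Phi_inj : Function.Injective (Phi : OrderedFinpartition k → Finset (Finset (Fin k))) := by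
  intro c c' hΦ
  have hl : c.length = c'.length := by rw [← Phi_card c, ← Phi_card c', hΦ]
  have hTcard : ((Phi c).image mx).card = c.length := by
    rw [Phi_image_mx, Finset.card_image_of_injective _ (keyfun_natval_inj c),
      Finset.card_univ, Fintype.card_fin]
  have hkeys : (fun m => ((keyfun c m : ℕ))) = (fun m => ((keyfun c' (Fin.cast hl m) : ℕ))) := by
    refine strictMono_unique hTcard ?_ ?_ ?_ ?_
    · intro a b hab
      exact (keyfun_strictMono c) hab
    · intro a b hab
      exact (keyfun_strictMono c') (by exact hab)
    · intro i
      rw [Phi_image_mx]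
      exact Finset.mem_image_of_mem _ (Finset.mem_univ i)
    · intro i
      rw [hΦ, Phi_image_mx]
      exact Finset.mem_image_of_mem _ (Finset.mem_univ _)
  have hblocks : ∀ m, toBlocks c m = toBlocks c' (Fin.cast hl m) := by
    intro m
    have hmem : toBlocks c' (Fin.cast hl m) ∈ Phi c := by
      rw [hΦ, Phi]
      exact Finset.mem_image_of_mem _ (Finset.mem_univ _)
    rcases Finset.mem_image.1 hmem with ⟨b, -, hb⟩
    have hmx : mx (toBlocks c b) = mx (toBlocks c m) := by
      rw [hb, mx_toBlocks, mx_toBlocks, ← congrFun hkeys m]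
    have hbm : b = m := by
      apply keyfun_natval_inj c
      show (keyfun c b : ℕ) = (keyfun c m : ℕ)
      rw [← mx_toBlocks, ← mx_toBlocks, hmx]
    rw [← hb, hbm]
  have hp : ∀ m, c.partSize m = c'.partSize (Fin.cast hl m) := fun m => by
    rw [← toBlocks_card, ← toBlocks_card, hblocks m]
  have he : ∀ m i, c.emb m i = c'.emb (Fin.cast hl m) (Fin.cast (hp m) i) := by
    intro m
    have := strictMono_unique (s := toBlocks c m) (toBlocks_card c m)
      (c.emb_strictMono m)
      (w := fun i => c'.emb (Fin.cast hl m) (Fin.cast (hp m) i))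
      (fun a b hab => (c'.emb_strictMono _) (by exact hab))
      (fun i => mem_toBlocks.2 ⟨i, rfl⟩)
      (fun i => by
        rw [hblocks m]
        exact mem_toBlocks.2 ⟨_, rfl⟩)
    exact fun i => congrFun this i
  exact ofp_ext c c' hl hp he

end Part6

section Part7
open scoped Classical ContDiff
open OrderedFinpartition

variable {k : ℕ}

theorem Phi_surj (ξ : Finset (Finset (Fin k))) (hs0 : ∅ ∉ ξ)
    (hs1 : (∑ β ∈ ξ, ind β) = fun _ => 1) : ∃ c : OrderedFinpartition k, Phi c = ξ := by
  have hcount : ∀ j : Fin k, (ξ.filter (fun β => j ∈ β)).card = 1 := by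
    intro j
    have h := congrFun hs1 j
    rw [Finset.sum_apply] at h
    rw [Finset.card_filter]
    calc ∑ β ∈ ξ, (if j ∈ β then 1 else 0) = ∑ β ∈ ξ, ind β j :=
          Finset.sum_congr rfl (fun β _ => rfl)
      _ = 1 := h
  have huniq : ∀ j : Fin k, ∃! β, β ∈ ξ ∧ j ∈ β := by
    intro j
    rcases Finset.card_eq_one.1 (hcount j) with ⟨β₀, hβ₀⟩
    have hβmem := Finset.mem_filter.1 (hβ₀ ▸ Finset.mem_singleton_self β₀)
    refine ⟨β₀, hβmem, ?_⟩
    intro β hβ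
    have hmem : β ∈ ξ.filter (fun β => j ∈ β) := Finset.mem_filter.2 hβ
    rw [hβ₀, Finset.mem_singleton] at hmem
    exact hmem
  have hne : ∀ β ∈ ξ, β.Nonempty :=
    fun β hβ => Finset.nonempty_iff_ne_empty.2 (fun h => hs0 (h ▸ hβ))
  have hmxinj : ∀ β ∈ ξ, ∀ β' ∈ ξ, mx β = mx β' → β = β' := by
    intro β hβ β' hβ' hmx
    rcases Finset.exists_mem_eq_sup β (hne β hβ) (fun a => (a : ℕ)) with ⟨a, ha, hav⟩
    rcases Finset.exists_mem_eq_sup β' (hne β' hβ') (fun a => (a : ℕ)) with ⟨a', ha', hav'⟩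
    have haa : a = a' := Fin.val_injective (by
      show (a : ℕ) = (a' : ℕ)
      rw [← hav, ← hav']
      exact hmx)
    subst haa
    obtain ⟨β₁, -, hu⟩ := huniq a
    rw [hu β ⟨hβ, ha⟩, hu β' ⟨hβ', ha'⟩]
  have hdisj : ∀ β ∈ ξ, ∀ β' ∈ ξ, β ≠ β' → Disjoint β β' := by
    intro β hβ β' hβ' hnee
    rw [Finset.disjoint_left]
    intro a ha ha'
    obtain ⟨β₁, -, hu⟩ := huniq a
    exact hnee ((hu β ⟨hβ, ha⟩).trans (hu β' ⟨hβ', ha'⟩).symm)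
  set n := ξ.card with hn
  have hTcard : (ξ.image mx).card = n :=
    Finset.card_image_of_injOn (fun β hβ β' hβ' => hmxinj β hβ β' hβ')
  set e := (ξ.image mx).orderEmbOfFin hTcard with he
  have hex : ∀ i : Fin n, ∃! β, β ∈ ξ ∧ mx β = e i := by
    intro i
    have hmem : (e i : ℕ) ∈ ξ.image mx := (ξ.image mx).orderEmbOfFin_mem hTcard i
    rcases Finset.mem_image.1 hmem with ⟨β, hβ, hβmx⟩
    exact ⟨β, ⟨hβ, hβmx⟩, fun β' hβ' => hmxinj β' hβ'.1 β hβ (hβ'.2.trans hβmx.symm)⟩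
  set blk : Fin n → Finset (Fin k) := fun i => ξ.choose _ (hex i) with hblk
  have hblkmem : ∀ i, blk i ∈ ξ := fun i => Finset.choose_mem _ _ _
  have hblkmx : ∀ i, mx (blk i) = e i :=
    fun i => Finset.choose_property (fun a => mx a = e i) ξ (hex i)
  have hblkne : ∀ i, (blk i).Nonempty := fun i => hne _ (hblkmem i)
  have hblkpos : ∀ i, 0 < (blk i).card := fun i => Finset.card_pos.2 (hblkne i)
  have hblkinj : Function.Injective blk := by
    intro i i' h
    apply e.injective
    rw [← hblkmx i, ← hblkmx i', h]
  have himg : Finset.univ.image blk = ξ := by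
    apply Finset.eq_of_subset_of_card_le
    · intro β hβ
      rcases Finset.mem_image.1 hβ with ⟨i, -, rfl⟩
      exact hblkmem i
    · rw [Finset.card_image_of_injective _ hblkinj, Finset.card_univ, Fintype.card_fin]
  have hlast_ge : ∀ (i : Fin n) (a : Fin k), a ∈ blk i →
      a ≤ (blk i).orderEmbOfFin rfl ⟨(blk i).card - 1, Nat.sub_one_lt_of_lt (hblkpos i)⟩ := by
    intro i a ha
    have hmem : a ∈ Set.range ((blk i).orderEmbOfFin rfl) := by
      rw [Finset.range_orderEmbOfFin]
      exact ha
    rcases hmem with ⟨r, rfl⟩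
    exact ((blk i).orderEmbOfFin rfl).monotone (by
      rw [Fin.le_def]
      exact Nat.le_sub_one_of_lt r.2)
  have hlast_mem : ∀ i : Fin n,
      (blk i).orderEmbOfFin rfl ⟨(blk i).card - 1, Nat.sub_one_lt_of_lt (hblkpos i)⟩ ∈ blk i :=
    fun i => Finset.orderEmbOfFin_mem _ _ _
  have hmx_last : ∀ i : Fin n,
      mx (blk i) =
        ((blk i).orderEmbOfFin rfl ⟨(blk i).card - 1, Nat.sub_one_lt_of_lt (hblkpos i)⟩ : ℕ) := by
    intro i
    rw [mx]
    apply le_antisymm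
    · exact Finset.sup_le (fun a ha => hlast_ge i a ha)
    · exact Finset.le_sup (f := fun a => ((a : Fin k) : ℕ)) (hlast_mem i)
  refine ⟨⟨n, fun i => (blk i).card, hblkpos,
    fun i => (blk i).orderEmbOfFin rfl, fun i => ((blk i).orderEmbOfFin rfl).strictMono,
    ?_, ?_, ?_⟩, ?_⟩
  · intro i i' hii
    rw [Fin.lt_def]
    show (((blk i).orderEmbOfFin rfl ⟨(blk i).card - 1, _⟩ : Fin k) : ℕ) <
      (((blk i').orderEmbOfFin rfl ⟨(blk i').card - 1, _⟩ : Fin k) : ℕ)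
    rw [← hmx_last i, ← hmx_last i', hblkmx i, hblkmx i']
    exact e.strictMono hii
  · intro i hi i' hi' hnee
    have hr : ∀ m : Fin n, Set.range ((blk m).orderEmbOfFin rfl) = ↑(blk m) :=
      fun m => Finset.range_orderEmbOfFin _ _
    show Disjoint (Set.range ((blk i).orderEmbOfFin rfl)) (Set.range ((blk i').orderEmbOfFin rfl))
    rw [hr i, hr i', Finset.disjoint_coe]
    exact hdisj _ (hblkmem i) _ (hblkmem i') (fun h => hnee (hblkinj h))
  · intro j
    obtain ⟨β, ⟨hβ, hjβ⟩, -⟩ := huniq j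
    have : β ∈ Finset.univ.image blk := himg.symm ▸ hβ
    rcases Finset.mem_image.1 this with ⟨i, -, rfl⟩
    refine ⟨i, ?_⟩
    show j ∈ Set.range ((blk i).orderEmbOfFin rfl)
    rw [Finset.range_orderEmbOfFin]
    exact hjβ
  · rw [Phi]
    have htb : ∀ i : Fin n, Finset.univ.image ((blk i).orderEmbOfFin rfl) = blk i := by
      intro i
      apply Finset.coe_injective
      rw [Finset.coe_image, Finset.coe_univ, Set.image_univ, Finset.range_orderEmbOfFin]
    change Finset.univ.image (fun i : Fin n => Finset.univ.image ((blk i).orderEmbOfFin rfl)) = ξ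
    rw [Finset.image_congr (fun i _ => htb i), himg]

end Part7

section Part8
open scoped Classical ContDiff
open OrderedFinpartition

variable {E F : Type*} [NormedAddCommGroup E] [NormedSpace ℝ E]
  [NormedAddCommGroup F] [NormedSpace ℝ F]
  {G : Type*} [NormedAddCommGroup G] [NormedSpace ℝ G]

theorem blockEval (g : E → F) (hg : ContDiff ℝ (⊤ : ℕ∞) g) {k : ℕ} (u : Fin k → E) (x : E)
    (s : Finset (Fin k)) (N : ℕ) (hN : s.card = N) (eemb : Fin N → Fin k)
    (hsm : StrictMono eemb) (hmem : ∀ i, eemb i ∈ s) :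
    dIter k u (fun j => decide (j ∈ s)) g x = iteratedFDeriv ℝ N g x (fun i => u (eemb i)) := by
  rw [dIter_eq g hg]
  have hlen : (sel k (fun j => decide (j ∈ s))).length = N := by
    rw [sel_length, ← hN]
    congr 1
    ext i
    rw [Finset.mem_filter]
    constructor
    · rintro ⟨-, h2⟩
      exact of_decide_eq_true h2
    · intro h2
      exact ⟨Finset.mem_univ i, decide_eq_true h2⟩
  refine my_iter_congr g hlen x _ _ (fun i => ?_)
  have hv : (fun i : Fin N => (sel k (fun j => decide (j ∈ s))).get (Fin.cast hlen.symm i)) =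
      eemb := by
    refine strictMono_unique hN ?_ hsm ?_ hmem
    · intro a b hab
      exact sel_get_strictMono _ _ hab
    · intro i
      exact of_decide_eq_true (sel_get_mem k (fun j => decide (j ∈ s)) (Fin.cast hlen.symm i))
  exact congrArg u (congrFun hv i)

theorem match_term (f : F → G) (g : E → F) (hf : ContDiff ℝ (⊤ : ℕ∞) f)
    (hg : ContDiff ℝ (⊤ : ℕ∞) g) {k : ℕ} (u : Fin k → E) (x : E)
    (c : OrderedFinpartition k) (N : ℕ) (hN : N = c.length)
    (e : Fin N → Finset (Fin k)) (hmem : ∀ i, e i ∈ Phi c) (hinj : Function.Injective e) :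
    iteratedFDeriv ℝ N f (g x) (fun i => dIter k u (fun j => decide (j ∈ e i)) g x) =
      iteratedFDeriv ℝ c.length f (g x)
        (fun m => iteratedFDeriv ℝ (c.partSize m) g x (u ∘ c.emb m)) := by
  subst hN
  have hσex : ∀ i, ∃ m, toBlocks c m = e i := by
    intro i
    rcases Finset.mem_image.1 (hmem i) with ⟨m, -, hm⟩
    exact ⟨m, hm⟩
  choose σ hσ using hσex
  have hσinj : Function.Injective σ := by
    intro a b h
    apply hinj
    rw [← hσ a, ← hσ b, h]
  have hσbij : Function.Bijective σ := Finite.injective_iff_bijective.1 hσinj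
  have hterm : (fun i => dIter k u (fun j => decide (j ∈ e i)) g x) =
      (fun m => iteratedFDeriv ℝ (c.partSize m) g x (u ∘ c.emb m)) ∘
        (Equiv.ofBijective σ hσbij) := by
    funext i
    show dIter k u (fun j => decide (j ∈ e i)) g x =
      iteratedFDeriv ℝ (c.partSize (σ i)) g x (u ∘ c.emb (σ i))
    rw [← hσ i]
    exact blockEval g hg u x (toBlocks c (σ i)) (c.partSize (σ i)) (toBlocks_card c (σ i))
      (c.emb (σ i)) (c.emb_strictMono (σ i)) (fun r => mem_toBlocks.2 ⟨r, rfl⟩)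
  rw [hterm]
  exact my_symm hf c.length (Equiv.ofBijective σ hσbij) (g x) _

end Part8

/-- Smooth Faà di Bruno formula with cube multi-indices, for `α = (1,…,1)`:
`D_u^α(f∘g)(x) = ∑_{{α¹,…,αⁿ} partition of α} Dⁿf_{g(x)}(D_u^{α¹}g(x), …, D_u^{αⁿ}g(x))`,
where the sum is over all sets of distinct nonzero multi-indices in `{0,1}^k`
(identified with subsets of `Fin k`) summing to `α`, and `Dⁿf_{g(x)}` is the `n`-th
derivative as a symmetric `n`-multilinear map. -/
theorem faa_di_bruno_cube {X Y Z : Type*}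
    [NormedAddCommGroup X] [NormedSpace ℝ X] [FiniteDimensional ℝ X]
    [NormedAddCommGroup Y] [NormedSpace ℝ Y] [FiniteDimensional ℝ Y]
    [NormedAddCommGroup Z] [NormedSpace ℝ Z] [FiniteDimensional ℝ Z]
    (f : X → Y) (g : Z → X) (hf : ContDiff ℝ (⊤ : ℕ∞) f) (hg : ContDiff ℝ (⊤ : ℕ∞) g)
    (k : ℕ) (x : Z) (u : Fin k → Z) :
    dIter k u (fun _ => true) (f ∘ g) x =
      ∑ ξ ∈ Finset.univ.filter
          (fun ξ : Finset (Finset (Fin k)) =>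
            ∅ ∉ ξ ∧ (∑ β ∈ ξ, ind β) = fun _ => 1),
        iteratedFDeriv ℝ ξ.card f (g x)
          (fun i => dIter k u (fun j => decide (j ∈ (ξ.equivFin.symm i).1)) g x) := by
  have hf' : ContDiff ℝ (⊤ : ℕ∞) f := hf.of_le (by simp)
  have hg' : ContDiff ℝ (⊤ : ℕ∞) g := hg.of_le (by simp)
  have hLHS : dIter k u (fun _ => true) (f ∘ g) x = iteratedFDeriv ℝ k (f ∘ g) x u := by
    have hconst : (fun _ : Fin k => true) =
        (fun j => decide (j ∈ (Finset.univ : Finset (Fin k)))) := by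
      funext j
      simp
    rw [hconst, blockEval (f ∘ g) (hf'.comp hg') u x Finset.univ k (by simp) id
      strictMono_id (fun i => Finset.mem_univ i)]
    rfl
  rw [hLHS, my_faa f g hf' hg' k x u]
  refine Finset.sum_bij (fun c _ => Phi c) ?_ ?_ ?_ ?_
  · intro c _
    exact Finset.mem_filter.2 ⟨Finset.mem_univ _, Phi_prop c⟩
  · intro c _ c' _ h
    exact Phi_inj h
  · intro ξ hξ
    rcases Finset.mem_filter.1 hξ with ⟨-, h0, h1⟩
    rcases Phi_surj ξ h0 h1 with ⟨c, hc⟩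
    exact ⟨c, Finset.mem_univ c, hc⟩
  · intro c _
    exact (match_term f g hf' hg' u x c (Phi c).card (Phi_card c)
      (fun i => ((Phi c).equivFin.symm i).1)
      (fun i => ((Phi c).equivFin.symm i).2)
      (fun a b h => (Equiv.injective _) (Subtype.val_injective h))).symm
end

section
/- Classical one-dimensional Faà di Bruno: for smooth f, g : ℝ → ℝ and n ≥ 1, (f∘g)^{(n)}(x) = Σ (n!/(b_1!⋯b_n!)) f^{(b_1+⋯+b_n)}(g(x)) ∏_{i=1}^n (g^{(i)}(x)/i!)^{b_i}, where the sum is over all (b_1,…,b_n) ∈ ℕⁿ with b_1 + 2b_2 + ⋯ + n b_n = n. -/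
open scoped Nat

open Finset


def SS (m t : ℕ) : Finset (Fin m → ℕ) :=
  (Fintype.piFinset fun _ => Finset.range (t+1)).filter fun v => ∑ i, (i.1+1) * v i = t

lemma mem_SS {m t : ℕ} {v : Fin m → ℕ} : v ∈ SS m t ↔ ∑ i, (i.1+1) * v i = t := by
  simp only [SS, mem_filter, Fintype.mem_piFinset, mem_range]
  refine ⟨fun h => h.2, fun h => ⟨fun i => Nat.lt_succ_of_le ?_, h⟩⟩
  calc v i ≤ (i.1+1) * v i := Nat.le_mul_of_pos_left _ i.1.succ_pos
    _ ≤ _ := h ▸ Finset.single_le_sum (f := fun i : Fin m => (i.1+1) * v i) (fun i _ => Nat.zero_le _) (mem_univ i)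

def mv {n : ℕ} (c : Fin (n+1)) (v : Fin n → ℕ) : Fin (n+1) → ℕ :=
  Function.update (Fin.snoc v 0) c ((Fin.snoc v 0 : Fin (n+1) → ℕ) c + 1)

def unmv {n : ℕ} (c : Fin (n+1)) (b : Fin (n+1) → ℕ) : Fin n → ℕ :=
  fun i => Function.update b c (b c - 1) i.castSucc
-- helper lemmas (generic)
section helpers
variable {M : Type*}

lemma prodA [CommMonoid M] {m : ℕ} (G : Fin m → ℕ → M) (v : Fin m → ℕ)
    (c : Fin m) (a : ℕ) :
    ∏ i, G i (Function.update v c a i) = G c a * ∏ i ∈ univ.erase c, G i (v i) := by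
  rw [← Finset.mul_prod_erase univ _ (mem_univ c), Function.update_self]
  exact congrArg _ (Finset.prod_congr rfl fun i hi => by
    rw [Function.update_of_ne (mem_erase.mp hi).1])

lemma sumA [AddCommMonoid M] {m : ℕ} (G : Fin m → ℕ → M) (v : Fin m → ℕ)
    (c : Fin m) (a : ℕ) :
    ∑ i, G i (Function.update v c a i) = G c a + ∑ i ∈ univ.erase c, G i (v i) := by
  rw [← Finset.add_sum_erase univ _ (mem_univ c), Function.update_self]
  exact congrArg _ (Finset.sum_congr rfl fun i hi => by
    rw [Function.update_of_ne (mem_erase.mp hi).1])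

lemma prod_snoc [CommMonoid M] {n : ℕ} (b : Fin n → ℕ) (F : Fin (n+1) → ℕ → M)
    (hF : F (Fin.last n) 0 = 1) :
    ∏ i, F i ((Fin.snoc b 0 : Fin (n+1) → ℕ) i) = ∏ i : Fin n, F i.castSucc (b i) := by
  rw [Fin.prod_univ_castSucc]; simp [hF]

lemma sum_snoc [AddCommMonoid M] {n : ℕ} (b : Fin n → ℕ) (F : Fin (n+1) → ℕ → M)
    (hF : F (Fin.last n) 0 = 0) :
    ∑ i, F i ((Fin.snoc b 0 : Fin (n+1) → ℕ) i) = ∑ i : Fin n, F i.castSucc (b i) := by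
  rw [Fin.sum_univ_castSucc]; simp [hF]

lemma prod_snoc_erase [CommMonoid M] {n : ℕ} (G : Fin (n+1) → ℕ → M)
    (hG : G (Fin.last n) 0 = 1) (v : Fin n → ℕ) (c : Fin (n+1)) :
    G c ((Fin.snoc v 0 : Fin (n+1) → ℕ) c)
        * ∏ i ∈ univ.erase c, G i ((Fin.snoc v 0 : Fin (n+1) → ℕ) i)
      = ∏ i : Fin n, G i.castSucc (v i) := by
  rw [Finset.mul_prod_erase univ (fun i => G i ((Fin.snoc v 0 : Fin (n+1) → ℕ) i)) (mem_univ c),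
    prod_snoc v G hG]

lemma sum_snoc_erase [AddCommMonoid M] {n : ℕ} (G : Fin (n+1) → ℕ → M)
    (hG : G (Fin.last n) 0 = 0) (v : Fin n → ℕ) (c : Fin (n+1)) :
    G c ((Fin.snoc v 0 : Fin (n+1) → ℕ) c)
        + ∑ i ∈ univ.erase c, G i ((Fin.snoc v 0 : Fin (n+1) → ℕ) i)
      = ∑ i : Fin n, G i.castSucc (v i) := by
  rw [Finset.add_sum_erase univ (fun i => G i ((Fin.snoc v 0 : Fin (n+1) → ℕ) i)) (mem_univ c),
    sum_snoc v G hG]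

end helpers

-- key facts about mv
lemma sum_mul_mv {n : ℕ} (c : Fin (n+1)) (v : Fin n → ℕ) :
    ∑ i, (i.1+1) * mv c v i = (∑ i, (i.1+1) * v i) + c.1 + 1 := by
  rw [mv, sumA (fun i e => (i.1+1) * e)]
  have key := sum_snoc_erase (fun i e => (i.1+1) * e) (by simp) v c
  simp only [Fin.coe_castSucc] at key ⊢
  rw [← key]; ring

lemma sum_mv {n : ℕ} (c : Fin (n+1)) (v : Fin n → ℕ) :
    ∑ i, mv c v i = (∑ i, v i) + 1 := by
  rw [mv, sumA (fun _ e => e)]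
  have key := sum_snoc_erase (fun _ e => e) (by simp) v c
  try simp only [Fin.coe_castSucc] at key ⊢
  rw [← key]; ring

lemma prod_fact_mv {n : ℕ} (c : Fin (n+1)) (v : Fin n → ℕ) :
    ∏ i, (mv c v i)! = ((Fin.snoc v 0 : Fin (n+1) → ℕ) c + 1) * ∏ i, (v i)! := by
  rw [mv, prodA (fun _ e => e !)]
  have key := prod_snoc_erase (fun _ e => e !) (by simp) v c
  try simp only [Fin.coe_castSucc] at key ⊢
  rw [← key, Nat.factorial_succ]; ring

lemma prod_pow_mv {n : ℕ} (c : Fin (n+1)) (v : Fin n → ℕ) (H : ℕ → ℝ) :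
    ∏ i, H i.1 ^ mv c v i = H c.1 * ∏ i : Fin n, H i.1 ^ v i := by
  rw [mv, prodA (fun i e => H i.1 ^ e)]
  have key := prod_snoc_erase (fun (i : Fin (n+1)) e => H i.1 ^ e) (by simp) v c
  simp only [Fin.coe_castSucc] at key ⊢
  rw [← key, pow_succ]; ring
lemma mem_SS_succ_le {n : ℕ} {b : Fin (n+1) → ℕ} (hb : b ∈ SS (n+1) (n+1)) (c : Fin (n+1)) :
    (c.1+1) * b c ≤ n+1 :=
  le_of_le_of_eq (Finset.single_le_sum (f := fun i : Fin (n+1) => (i.1+1) * b i)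
    (fun i _ => Nat.zero_le _) (mem_univ c)) (mem_SS.mp hb)

lemma update_last_zero {n : ℕ} {b : Fin (n+1) → ℕ} (hb : b ∈ SS (n+1) (n+1)) {c : Fin (n+1)}
    (hc : 0 < b c) : Function.update b c (b c - 1) (Fin.last n) = 0 := by
  rcases eq_or_ne c (Fin.last n) with rfl | hne
  · rw [Function.update_self]
    have := mem_SS_succ_le hb (Fin.last n)
    simp only [Fin.val_last] at this
    have : b (Fin.last n) ≤ 1 := by nlinarith
    omega
  · rw [Function.update_of_ne (Ne.symm hne)]
    by_contra h
    have h1 : 0 < b (Fin.last n) := Nat.pos_of_ne_zero h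
    have key : ∑ i, (i.1+1) * b i = n+1 := mem_SS.mp hb
    rw [← Finset.add_sum_erase univ _ (mem_univ c)] at key
    have h2 : (Fin.last n).1 + 1 ≤ ((Fin.last n).1+1) * b (Fin.last n) :=
      Nat.le_mul_of_pos_right _ h1
    have h3 : ((Fin.last n).1+1) * b (Fin.last n) ≤
        ∑ i ∈ univ.erase c, (i.1+1) * b i :=
      Finset.single_le_sum (f := fun i : Fin (n+1) => (i.1+1) * b i)
        (fun i _ => Nat.zero_le _) (mem_erase.mpr ⟨Ne.symm hne, mem_univ _⟩)
    have h4 : 1 ≤ (c.1+1) * b c := Nat.le_mul_of_pos_right _ hc |>.trans' (by omega)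
    simp only [Fin.val_last] at h2 h3
    omega

lemma snoc_unmv {n : ℕ} {b : Fin (n+1) → ℕ} (hb : b ∈ SS (n+1) (n+1)) {c : Fin (n+1)}
    (hc : 0 < b c) :
    (Fin.snoc (unmv c b) 0 : Fin (n+1) → ℕ) = Function.update b c (b c - 1) := by
  funext i
  induction i using Fin.lastCases with
  | last => rw [Fin.snoc_last, update_last_zero hb hc]
  | cast k => rw [Fin.snoc_castSucc]; rfl

lemma unmv_mem {n : ℕ} {b : Fin (n+1) → ℕ} (hb : b ∈ SS (n+1) (n+1)) {c : Fin (n+1)}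
    (hc : 0 < b c) : unmv c b ∈ SS n (n - c.1) := by
  rw [mem_SS]
  have key : ∑ i, (i.1+1) * (Function.update b c (b c - 1)) i
      = ∑ i : Fin n, (i.1+1) * unmv c b i := by
    rw [← snoc_unmv hb hc, sum_snoc _ (fun i e => (i.1+1) * e) (by simp)]
    simp only [Fin.coe_castSucc]
  rw [sumA (fun i e => (i.1+1) * e)] at key
  have key2 : ∑ i, (i.1+1) * b i = n+1 := mem_SS.mp hb
  rw [← Finset.add_sum_erase univ _ (mem_univ c)] at key2
  have hle : (c.1+1) * b c ≤ n+1 := mem_SS_succ_le hb c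
  obtain ⟨B, hB⟩ : ∃ B, b c = B + 1 := ⟨b c - 1, by omega⟩
  rw [hB] at key key2 hle
  simp only [Nat.add_sub_cancel, Nat.mul_succ] at key key2 hle
  omega

lemma mv_mem {n : ℕ} {v : Fin n → ℕ} (c : Fin (n+1)) (hv : v ∈ SS n (n - c.1)) :
    mv c v ∈ SS (n+1) (n+1) := by
  rw [mem_SS, sum_mul_mv, mem_SS.mp hv]
  omega

lemma unmv_mv {n : ℕ} (c : Fin (n+1)) (v : Fin n → ℕ) : unmv c (mv c v) = v := by
  funext i
  simp only [unmv, mv, Function.update_idem, Function.update_self, Nat.add_sub_cancel,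
    Function.update_eq_self, Fin.snoc_castSucc]

lemma mv_unmv {n : ℕ} {b : Fin (n+1) → ℕ} (hb : b ∈ SS (n+1) (n+1)) {c : Fin (n+1)}
    (hc : 0 < b c) : mv c (unmv c b) = b := by
  rw [mv, snoc_unmv hb hc, Function.update_idem, Function.update_self,
    Nat.sub_add_cancel hc, Function.update_eq_self]

lemma mv_apply_c {n : ℕ} (c : Fin (n+1)) (v : Fin n → ℕ) :
    mv c v c = (Fin.snoc v 0 : Fin (n+1) → ℕ) c + 1 := Function.update_self ..

/-- The key reindexing identity. -/
lemma sum_SS_succ {n : ℕ} (c : Fin (n+1)) (val : (Fin (n+1) → ℕ) → ℝ) :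
    ∑ b ∈ SS (n+1) (n+1), (b c : ℝ) * val b
      = ∑ v ∈ SS n (n - c.1),
          (((Fin.snoc v 0 : Fin (n+1) → ℕ) c : ℕ) + 1 : ℝ) * val (mv c v) := by
  rw [← Finset.sum_filter_of_ne (p := fun b => 0 < b c)
    (fun b _ hb => Nat.pos_of_ne_zero fun h => hb (by simp [h]))]
  refine Finset.sum_nbij' (unmv c) (mv c) (fun a ha => ?_) (fun v hv => ?_)
    (fun a ha => ?_) (fun v hv => ?_) (fun a ha => ?_)
  · exact unmv_mem (mem_filter.mp ha).1 (mem_filter.mp ha).2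
  · exact mem_filter.mpr ⟨mv_mem c hv, by rw [mv_apply_c]; omega⟩
  · exact mv_unmv (mem_filter.mp ha).1 (mem_filter.mp ha).2
  · exact unmv_mv c v
  · obtain ⟨ha1, ha2⟩ := mem_filter.mp ha
    rw [mv_unmv ha1 ha2, snoc_unmv ha1 ha2, Function.update_self]
    congr 1
    rw [Nat.cast_sub ha2]
    norm_num
lemma prod_fact_ne_zero {m : ℕ} (v : Fin m → ℕ) : (∏ i, ((v i)! : ℝ)) ≠ 0 :=
  Finset.prod_ne_zero_iff.mpr fun i _ => Nat.cast_ne_zero.mpr (Nat.factorial_ne_zero _)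

/-- Case lemma: the `c`-indexed piece of the target sum, pulled back along `mv c`. -/
lemma caseGen (n : ℕ) (c : Fin (n+1)) (ph H : ℕ → ℝ) :
    ∑ b ∈ SS (n+1) (n+1),
        ((n ! : ℝ) * (c.1+1) * b c / ∏ i, ((b i)! : ℝ)) * ph (∑ i, b i) * ∏ i, H i.1 ^ b i
      = ∑ v ∈ SS n (n - c.1),
        ((n ! : ℝ) * (c.1+1) / ∏ i, ((v i)! : ℝ)) * ph ((∑ i, v i) + 1)
          * (H c.1 * ∏ i : Fin n, H i.1 ^ v i) := by
  have key := sum_SS_succ c (fun b => ((n ! : ℝ) * (c.1+1) / ∏ i, ((b i)! : ℝ))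
    * ph (∑ i, b i) * ∏ i, H i.1 ^ b i)
  rw [show (∑ b ∈ SS (n+1) (n+1),
      ((n ! : ℝ) * (c.1+1) * b c / ∏ i, ((b i)! : ℝ)) * ph (∑ i, b i) * ∏ i, H i.1 ^ b i)
    = ∑ b ∈ SS (n+1) (n+1), (b c : ℝ) * (((n ! : ℝ) * (c.1+1) / ∏ i, ((b i)! : ℝ))
      * ph (∑ i, b i) * ∏ i, H i.1 ^ b i) from Finset.sum_congr rfl fun b _ => by ring]
  rw [key]
  refine Finset.sum_congr rfl fun v _ => ?_
  have h1 : (∏ i, ((mv c v i)! : ℝ))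
      = (((Fin.snoc v 0 : Fin (n+1) → ℕ) c : ℕ) + 1 : ℝ) * ∏ i, ((v i)! : ℝ) := by
    rw [← Nat.cast_prod, prod_fact_mv, Nat.cast_mul, Nat.cast_prod]
    push_cast
    ring
  rw [sum_mv, prod_pow_mv, h1]
  have h2 : (((Fin.snoc v 0 : Fin (n+1) → ℕ) c : ℕ) + 1 : ℝ) ≠ 0 := by positivity
  have h3 := prod_fact_ne_zero v
  field_simp

lemma dn_mem {n : ℕ} {b : Fin n → ℕ} (hb : b ∈ SS n n) {j : Fin n} (hj : 0 < b j) :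
    Function.update b j (b j - 1) ∈ SS n (n - (j.1+1)) := by
  rw [mem_SS, sumA (fun i e => (i.1+1) * e)]
  have key : ∑ i, (i.1+1) * b i = n := mem_SS.mp hb
  rw [← Finset.add_sum_erase univ _ (mem_univ j)] at key
  obtain ⟨B, hB⟩ : ∃ B, b j = B + 1 := ⟨b j - 1, by omega⟩
  rw [hB] at key ⊢
  simp only [Nat.add_sub_cancel, Nat.mul_succ] at key ⊢
  omega

lemma up_mem {n : ℕ} {v : Fin n → ℕ} {j : Fin n} (hv : v ∈ SS n (n - (j.1+1))) :
    Function.update v j (v j + 1) ∈ SS n n := by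
  rw [mem_SS, sumA (fun i e => (i.1+1) * e)]
  have key : ∑ i, (i.1+1) * v i = n - (j.1+1) := mem_SS.mp hv
  rw [← Finset.add_sum_erase univ _ (mem_univ j)] at key
  have hj : j.1 + 1 ≤ n := j.2
  simp only [Nat.mul_succ]
  omega

/-- Case B: relate the derivative-shaped sum over `SS n n` to the `(n - (j+1))`-sum. -/
lemma caseB (n : ℕ) (j : Fin n) (ph H : ℕ → ℝ) :
    ∑ b ∈ SS n n,
        ((n ! : ℝ) / ∏ i, ((b i)! : ℝ)) * ph (∑ i, b i)
          * ((b j : ℝ) * (((j.1+1 : ℕ) : ℝ) + 1) * H (j.1+1) * ∏ i, H i.1 ^ (Function.update b j (b j - 1) i))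
      = ∑ v ∈ SS n (n - (j.1+1)),
        ((n ! : ℝ) * (((j.1+1 : ℕ) : ℝ) + 1) / ∏ i, ((v i)! : ℝ)) * ph ((∑ i, v i) + 1)
          * (H (j.1+1) * ∏ i : Fin n, H i.1 ^ v i) := by
  rw [← Finset.sum_filter_of_ne (p := fun b => 0 < b j)
    (fun b _ hb => Nat.pos_of_ne_zero fun h => hb (by simp [h]))]
  refine Finset.sum_nbij' (fun b => Function.update b j (b j - 1))
    (fun v => Function.update v j (v j + 1)) (fun b hb => ?_) (fun v hv => ?_)
    (fun b hb => ?_) (fun v hv => ?_) (fun b hb => ?_)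
  · exact dn_mem (Finset.mem_filter.mp hb).1 (Finset.mem_filter.mp hb).2
  · exact Finset.mem_filter.mpr ⟨up_mem hv, by simp⟩
  · obtain ⟨hb1, hb2⟩ := Finset.mem_filter.mp hb
    rw [Function.update_idem, Function.update_self, Nat.sub_add_cancel hb2,
      Function.update_eq_self]
  · rw [Function.update_idem, Function.update_self, Nat.add_sub_cancel, Function.update_eq_self]
  · obtain ⟨hb1, hb2⟩ := Finset.mem_filter.mp hb
    obtain ⟨B, hB⟩ : ∃ B, b j = B + 1 := ⟨b j - 1, by omega⟩
    have h1 : (∏ i, (((Function.update b j (b j - 1)) i)! : ℝ)) * ((b j : ℕ) : ℝ)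
        = ∏ i, ((b i)! : ℝ) := by
      rw [← Nat.cast_prod, prodA (fun _ e => e !), ← Nat.cast_prod, ← Nat.cast_mul,
        ← Finset.mul_prod_erase univ (fun i => (b i)!) (mem_univ j)]
      congr 1
      rw [hB]
      simp only [Nat.add_sub_cancel, Nat.factorial_succ]
      ring
    have h2 : (∑ i, Function.update b j (b j - 1) i) + 1 = ∑ i, b i := by
      rw [sumA (fun _ e => e), ← Finset.add_sum_erase univ b (mem_univ j), hB]
      simp only [Nat.add_sub_cancel]
      ring
    rw [← h2, ← h1]
    have h4 : ((b j : ℕ) : ℝ) ≠ 0 := by rw [hB]; positivity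
    have h5 := prod_fact_ne_zero (Function.update b j (b j - 1))
    field_simp
lemma assemble (n : ℕ) (ph H : ℕ → ℝ) :
    ∑ b ∈ SS (n+1) (n+1), (((n+1)! : ℝ) / ∏ i, ((b i)! : ℝ)) * ph (∑ i, b i) * ∏ i, H i.1 ^ b i
      = ∑ c : Fin (n+1), ∑ b ∈ SS (n+1) (n+1),
          ((n ! : ℝ) * (c.1+1) * b c / ∏ i, ((b i)! : ℝ)) * ph (∑ i, b i)
            * ∏ i, H i.1 ^ b i := by
  rw [Finset.sum_comm]
  refine Finset.sum_congr rfl fun b hb => ?_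
  have key : ∑ c : Fin (n+1), (c.1+1) * b c = n+1 := mem_SS.mp hb
  have e : ∑ c : Fin (n+1),
      ((n ! : ℝ) * (c.1+1) * b c / ∏ i, ((b i)! : ℝ)) * ph (∑ i, b i) * ∏ i, H i.1 ^ b i
      = (∑ c : Fin (n+1), (((c.1+1) * b c : ℕ) : ℝ))
        * (((n ! : ℝ) / ∏ i, ((b i)! : ℝ)) * ph (∑ i, b i) * ∏ i, H i.1 ^ b i) := by
    rw [Finset.sum_mul]
    exact Finset.sum_congr rfl fun c _ => by push_cast; ring
  rw [e, ← Nat.cast_sum, key]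
  push_cast [Nat.factorial_succ]
  ring

theorem faa_aux (f g : ℝ → ℝ) (hf : ContDiff ℝ (⊤ : ℕ∞) f) (hg : ContDiff ℝ (⊤ : ℕ∞) g) (n : ℕ) (x : ℝ) :
    iteratedDeriv n (f ∘ g) x =
      ∑ b ∈ SS n n, ((n ! : ℝ) / ∏ i, ((b i)! : ℝ)) * iteratedDeriv (∑ i, b i) f (g x)
        * ∏ i, (iteratedDeriv (i.1+1) g x / ((i.1+1)! : ℝ)) ^ b i := by
  induction n generalizing x with
  | zero =>
    have h0 : SS 0 0 = {fun _ : Fin 0 => 0} :=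
      Finset.eq_singleton_iff_unique_mem.mpr
        ⟨mem_SS.mpr (by simp), fun v _ => funext fun i => i.elim0⟩
    rw [h0, Finset.sum_singleton]
    simp [Function.comp]
  | succ n ih =>
    rw [iteratedDeriv_succ]
    have hrw : iteratedDeriv n (f ∘ g) = fun y => ∑ b ∈ SS n n,
        ((n ! : ℝ) / ∏ i, ((b i)! : ℝ)) * iteratedDeriv (∑ i, b i) f (g y)
          * ∏ i, (iteratedDeriv (i.1+1) g y / ((i.1+1)! : ℝ)) ^ b i := funext fun y => ih y
    rw [hrw]
    -- the derivative of each term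
    have hterm : ∀ b ∈ SS n n, HasDerivAt (fun y =>
        ((n ! : ℝ) / ∏ i, ((b i)! : ℝ)) * iteratedDeriv (∑ i, b i) f (g y)
          * ∏ i, (iteratedDeriv (i.1+1) g y / ((i.1+1)! : ℝ)) ^ b i)
        (((n ! : ℝ) / ∏ i, ((b i)! : ℝ))
            * (iteratedDeriv ((∑ i, b i) + 1) f (g x) * deriv g x)
            * ∏ i, (iteratedDeriv (i.1+1) g x / ((i.1+1)! : ℝ)) ^ b i
          + ((n ! : ℝ) / ∏ i, ((b i)! : ℝ)) * iteratedDeriv (∑ i, b i) f (g x)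
            * ∑ j, (∏ i ∈ univ.erase j,
                (iteratedDeriv (i.1+1) g x / ((i.1+1)! : ℝ)) ^ b i)
              • ((b j : ℝ) * (iteratedDeriv (j.1+1) g x / ((j.1+1)! : ℝ)) ^ (b j - 1)
                  * (iteratedDeriv (j.1+2) g x / ((j.1+1)! : ℝ)))) x := by
      intro b _
      have hu : HasDerivAt (fun y => iteratedDeriv (∑ i, b i) f (g y))
          (iteratedDeriv ((∑ i, b i)+1) f (g x) * deriv g x) x := by
        have h1 : HasDerivAt (iteratedDeriv (∑ i, b i) f)
            (iteratedDeriv ((∑ i, b i)+1) f (g x)) (g x) := by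
          rw [iteratedDeriv_succ]
          exact ((hf.differentiable_iteratedDeriv _ (by exact_mod_cast ENat.coe_lt_top (∑ i, b i))) (g x)).hasDerivAt
        exact h1.comp x ((hg.differentiable (by simp)) x).hasDerivAt
      have hp : ∀ j : Fin n, HasDerivAt
          (fun y => (iteratedDeriv (j.1+1) g y / ((j.1+1)! : ℝ)) ^ b j)
          ((b j : ℝ) * (iteratedDeriv (j.1+1) g x / ((j.1+1)! : ℝ)) ^ (b j - 1)
            * (iteratedDeriv (j.1+2) g x / ((j.1+1)! : ℝ))) x := by
        intro j
        have h2 : HasDerivAt (fun y => iteratedDeriv (j.1+1) g y / ((j.1+1)! : ℝ))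
            (iteratedDeriv (j.1+2) g x / ((j.1+1)! : ℝ)) x := by
          have h3 : HasDerivAt (iteratedDeriv (j.1+1) g)
              (iteratedDeriv (j.1+2) g x) x := by
            have h4 := ((hg.differentiable_iteratedDeriv (j.1+1)
              (by exact_mod_cast ENat.coe_lt_top (j.1+1))) x).hasDerivAt
            rw [show deriv (iteratedDeriv (j.1+1) g) x = iteratedDeriv (j.1+2) g x from
              (congrFun (iteratedDeriv_succ (n := j.1+1)).symm x)] at h4
            exact h4
          exact h3.div_const _
        exact h2.pow (b j)
      exact (hu.const_mul _).mul (HasDerivAt.fun_finsetProd fun j _ => hp j)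
    rw [(HasDerivAt.fun_sum hterm).deriv, Finset.sum_add_distrib]
    have eR := assemble n (fun k => iteratedDeriv k f (g x))
      (fun k => iteratedDeriv (k+1) g x / ((k+1)! : ℝ))
    beta_reduce at eR
    rw [eR, Fin.sum_univ_succ]
    congr 1
    · -- case A piece
      have e0 := caseGen n 0 (fun k => iteratedDeriv k f (g x))
        (fun k => iteratedDeriv (k+1) g x / ((k+1)! : ℝ))
      beta_reduce at e0
      simp only [Fin.val_zero, Nat.sub_zero] at e0 ⊢
      rw [e0]
      refine Finset.sum_congr rfl fun v hv => ?_
      norm_num [iteratedDeriv_one]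
      ring
    · -- case B piece
      have e1 : ∀ b : Fin n → ℕ,
          ((n ! : ℝ) / ∏ i, ((b i)! : ℝ)) * iteratedDeriv (∑ i, b i) f (g x)
            * ∑ j : Fin n, (∏ i ∈ univ.erase j,
                (iteratedDeriv (i.1+1) g x / ((i.1+1)! : ℝ)) ^ b i)
              • ((b j : ℝ) * (iteratedDeriv (j.1+1) g x / ((j.1+1)! : ℝ)) ^ (b j - 1)
                  * (iteratedDeriv (j.1+2) g x / ((j.1+1)! : ℝ)))
          = ∑ j : Fin n, ((n ! : ℝ) / ∏ i, ((b i)! : ℝ)) * iteratedDeriv (∑ i, b i) f (g x)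
              * ((b j : ℝ) * (((j.1+1 : ℕ) : ℝ) + 1)
                  * (iteratedDeriv (j.1+1+1) g x / ((j.1+1+1)! : ℝ))
                  * ∏ i, (iteratedDeriv (i.1+1) g x / ((i.1+1)! : ℝ))
                      ^ (Function.update b j (b j - 1) i)) := by
        intro b
        rw [Finset.mul_sum]
        refine Finset.sum_congr rfl fun j _ => ?_
        rw [smul_eq_mul,
          prodA (fun i e => (iteratedDeriv (i.1+1) g x / ((i.1+1)! : ℝ)) ^ e) b j (b j - 1)]
        have hfac : ((j.1+1+1)! : ℝ) = (((j.1+1 : ℕ) : ℝ) + 1) * ((j.1+1)! : ℝ) := by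
          rw [Nat.factorial_succ]; push_cast; ring
        have hne : ((j.1+1)! : ℝ) ≠ 0 := Nat.cast_ne_zero.mpr (Nat.factorial_ne_zero _)
        have hne2 : (((j.1+1 : ℕ) : ℝ) + 1) ≠ 0 := by positivity
        have hd : iteratedDeriv (j.1+2) g x / ((j.1+1)! : ℝ)
            = (((j.1+1 : ℕ) : ℝ) + 1) * (iteratedDeriv (j.1+1+1) g x / ((j.1+1+1)! : ℝ)) := by
          rw [hfac, show iteratedDeriv (j.1+2) g x = iteratedDeriv (j.1+1+1) g x from rfl]
          field_simp
        rw [hd]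
        ring
      rw [Finset.sum_congr rfl fun b _ => e1 b, Finset.sum_comm]
      refine Finset.sum_congr rfl fun j _ => ?_
      have ecb := caseB n j (fun k => iteratedDeriv k f (g x))
        (fun k => iteratedDeriv (k+1) g x / ((k+1)! : ℝ))
      beta_reduce at ecb
      have ecg := caseGen n j.succ (fun k => iteratedDeriv k f (g x))
        (fun k => iteratedDeriv (k+1) g x / ((k+1)! : ℝ))
      beta_reduce at ecg
      simp only [Fin.val_succ] at ecg ⊢
      rw [ecb, ← ecg]

/-- Classical one-dimensional Faà di Bruno formula: for smooth `f, g : ℝ → ℝ` and `n ≥ 1`,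
`(f∘g)^{(n)}(x) = ∑ (n!/(b₁!⋯bₙ!)) f^{(b₁+⋯+bₙ)}(g(x)) ∏ᵢ (g^{(i)}(x)/i!)^{bᵢ}`,
the sum being over all `(b₁,…,bₙ) ∈ ℕⁿ` with `b₁ + 2b₂ + ⋯ + nbₙ = n`.
(Any such `bᵢ` satisfies `bᵢ ≤ n`, so the solutions are parametrized by
functions `Fin n → Fin (n+1)`.) -/
theorem faa_di_bruno_one_dim (f g : ℝ → ℝ) (hf : ContDiff ℝ (⊤ : ℕ∞) f) (hg : ContDiff ℝ (⊤ : ℕ∞) g)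
    (n : ℕ) (hn : 1 ≤ n) (x : ℝ) :
    iteratedDeriv n (f ∘ g) x =
      ∑ b ∈ Finset.univ.filter
          (fun b : Fin n → Fin (n + 1) => ∑ i, (i.1 + 1) * (b i).1 = n),
        ((n ! : ℝ) / ∏ i, ((b i).1 ! : ℝ))
          * iteratedDeriv (∑ i, (b i).1) f (g x)
          * ∏ i, (iteratedDeriv (i.1 + 1) g x / ((i.1 + 1)! : ℝ)) ^ (b i).1 := by
  rw [faa_aux f g hf hg n x]
  have hle : ∀ b : Fin n → ℕ, b ∈ SS n n → ∀ i, b i ≤ n := by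
    intro b hb i
    calc b i ≤ (i.1+1) * b i := Nat.le_mul_of_pos_left _ i.1.succ_pos
      _ ≤ _ := le_of_le_of_eq (Finset.single_le_sum
          (f := fun i : Fin n => (i.1+1) * b i) (fun i _ => Nat.zero_le _) (mem_univ i))
          (mem_SS.mp hb)
  refine Finset.sum_nbij' (fun b i => (⟨min (b i) n, by omega⟩ : Fin (n+1)))
    (fun c i => (c i).1) (fun b hb => ?_) (fun c hc => ?_) (fun b hb => ?_)
    (fun c hc => ?_) (fun b hb => ?_)
  · refine Finset.mem_filter.mpr ⟨mem_univ _, ?_⟩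
    have h := mem_SS.mp hb
    calc ∑ i, (i.1+1) * min (b i) n = ∑ i, (i.1+1) * b i :=
          Finset.sum_congr rfl fun i _ => by rw [min_eq_left (hle b hb i)]
      _ = n := h
  · exact mem_SS.mpr (Finset.mem_filter.mp hc).2
  · funext i
    simp only [min_eq_left (hle b hb i)]
  · funext i
    exact Fin.ext (by simp [min_eq_left (Nat.lt_succ_iff.mp (c i).2)])
  · have hmin : ∀ i, min (b i) n = b i := fun i => min_eq_left (hle b hb i)
    simp only [hmin]
end

section
/- Components of the smooth iterated tangent map: if f : X → Y is C^k between real finite-dimensional vector spaces, then the component of T^k(f)(⟨⟨x; u⟩⟩) at multi-index α ∈ {0,1}^k equals D_u^α f(x), where ⟨⟨x; u⟩⟩ ∈ T^k(X) is the k-cuboid with base point x, component u_i at the i-th basis multi-index, and 0 at all multi-indices of order ≥ 2, and the iterated tangent functor is defined by T(f)(x,u) = (f(x), D_u f(x)), T^k = T ∘ T^{k−1}, identifying T^k(X) with cuboids (u_α)_{α ∈ {0,1}^k}. -/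
/-- The pairing of two `k`-cuboids into a `(k+1)`-cuboid, splitting along the last
coordinate of the discrete cube. -/
def pairCub {X : Type*} {k : ℕ} (u v : (Fin k → Bool) → X) : (Fin (k + 1) → Bool) → X :=
  fun α => if α (Fin.last k) then v (α ∘ Fin.castSucc) else u (α ∘ Fin.castSucc)

/-- The iterated (smooth) tangent map `T^k(f)`, identifying `T^k(X)` with `k`-cuboids:
`T^0(f) = f` and `T^{k+1}(f) = T(T^k(f))` where `T(F)(x,u) = (F(x), DF(x)u)`. -/
noncomputable def Tsm {X Y : Type*} [NormedAddCommGroup X] [NormedSpace ℝ X]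
    [NormedAddCommGroup Y] [NormedSpace ℝ Y] :
    (k : ℕ) → (X → Y) → (((Fin k → Bool) → X) → ((Fin k → Bool) → Y))
  | 0, f => fun w α => f (w α)
  | k + 1, f => fun w =>
      pairCub (Tsm k f (fun α => w (Fin.snoc α false)))
        (fderiv ℝ (Tsm k f) (fun α => w (Fin.snoc α false)) (fun α => w (Fin.snoc α true)))

/-- The `k`-cuboid `⟨⟨x; u⟩⟩`: base point `x`, component `uᵢ` at the `i`-th basis
multi-index, and `0` at all multi-indices of order `≥ 2`. -/
def angleCub {X : Type*} [AddCommGroup X] {k : ℕ} (x : X) (u : Fin k → X) :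
    (Fin k → Bool) → X :=
  fun α => (if ∀ j, α j = false then x else 0)
    + ∑ i, if α = (fun j => decide (j = i)) then u i else 0

/-!
Induct on `k`, splitting off the last coordinate. The two faces of `⟨⟨x; u⟩⟩` are `⟨⟨x; u'⟩⟩`,
with `u'` the first `k` directions, and the cuboid carrying `u_{k+1}` at its base point, which is
the derivative of `y ↦ ⟨⟨y; u'⟩⟩` along `u_{k+1}`. Hence the top face of `T^{k+1}(f)(⟨⟨x; u⟩⟩)` is
the derivative along `u_{k+1}` of `y ↦ T^k(f)(⟨⟨y; u'⟩⟩) = D_{u'}^{α'} f(y)`. As `D_u^α`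
differentiates in the first direction first, `D_{u_{k+1}}` must then be moved inside past the other
directional derivatives: this is where `f ∈ C^{k+1}` enters, through the symmetry of second
derivatives.
-/

section DirDeriv

variable {Z Y : Type*} [NormedAddCommGroup Z] [NormedSpace ℝ Z]
  [NormedAddCommGroup Y] [NormedSpace ℝ Y]

-- `fderiv`-based like `dIter` (so `0` where `f` is not differentiable), unlike `lineDeriv`.
noncomputable def dirDeriv (v : Z) (f : Z → Y) : Z → Y := fun x => fderiv ℝ f x v

theorem ContDiff.dirDeriv {n : WithTop ℕ∞} {f : Z → Y} (hf : ContDiff ℝ (n + 1) f) (v : Z) :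
    ContDiff ℝ n (dirDeriv v f) :=
  (hf.fderiv_right le_rfl).clm_apply contDiff_const

theorem fderiv_dirDeriv {f : Z → Y} {x : Z} (hf : DifferentiableAt ℝ (fderiv ℝ f) x) (v w : Z) :
    fderiv ℝ (dirDeriv v f) x w = fderiv ℝ (fderiv ℝ f) x w v := by
  unfold dirDeriv
  rw [fderiv_clm_apply hf (differentiableAt_const v)]
  simp

theorem dirDeriv_comm {f : Z → Y} (hf : ContDiff ℝ 2 f) (v w : Z) :
    dirDeriv v (dirDeriv w f) = dirDeriv w (dirDeriv v f) := by
  have hf' : Differentiable ℝ (fderiv ℝ f) :=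
    (hf.fderiv_right (m := 1) (by norm_num)).differentiable one_ne_zero
  funext x
  rw [dirDeriv, dirDeriv, fderiv_dirDeriv hf'.differentiableAt,
    fderiv_dirDeriv hf'.differentiableAt]
  exact hf.contDiffAt.isSymmSndFDerivAt (by simp [minSmoothness_of_isRCLikeNormedField]) v w

theorem dIter_succ (k : ℕ) (u : Fin (k + 1) → Z) (α : Fin (k + 1) → Bool) (f : Z → Y) :
    dIter (k + 1) u α f = if α 0 then dirDeriv (u 0) (dIter k (Fin.tail u) (Fin.tail α) f)
      else dIter k (Fin.tail u) (Fin.tail α) f := rfl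

theorem dIter_succ_last (k : ℕ) (u : Fin (k + 1) → Z) (α : Fin (k + 1) → Bool) (f : Z → Y) :
    dIter (k + 1) u α f = dIter k (Fin.init u) (Fin.init α)
      (if α (Fin.last k) then dirDeriv (u (Fin.last k)) f else f) := by
  induction k with
  | zero => cases α 0 <;> rfl
  | succ k ih =>
    rw [dIter_succ, dIter_succ _ (Fin.init u), ih, Fin.tail_init_eq_init_tail,
      Fin.tail_init_eq_init_tail]
    rfl

theorem dirDeriv_dIter (k : ℕ) (u : Fin k → Z) (β : Fin k → Bool) {f : Z → Y}
    (hf : ContDiff ℝ (k + 1) f) (v : Z) :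
    dirDeriv v (dIter k u β f) = dIter k u β (dirDeriv v f) := by
  induction k generalizing f v with
  | zero => rfl
  | succ k ih =>
    have hf' : ContDiff ℝ (k + 1) f := hf.of_le (by norm_cast; omega)
    rw [dIter_succ, dIter_succ]
    split_ifs
    · rw [ih _ _ hf', ih _ _ (hf.dirDeriv _), dirDeriv_comm (hf.of_le (by norm_cast; omega)),
        ← ih _ _ (hf.dirDeriv _)]
    · exact ih _ _ hf' v

end DirDeriv

section AngleCub

variable {X : Type*} [AddCommGroup X] {k : ℕ}

theorem decide_eq_castSucc_eq_snoc (i : Fin k) :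
    (fun j => decide (j = i.castSucc)) = Fin.snoc (fun j => decide (j = i)) false := by
  ext j
  refine Fin.lastCases ?_ (fun j => ?_) j
  · simp [(Fin.castSucc_lt_last i).ne']
  · simp

theorem decide_eq_last_eq_snoc :
    (fun j => decide (j = Fin.last k)) = Fin.snoc (fun _ => false) true := by
  ext j
  refine Fin.lastCases ?_ (fun j => ?_) j
  · simp
  · simp [(Fin.castSucc_lt_last j).ne]

theorem angleCub_restrict_snoc_false (x : X) (u : Fin (k + 1) → X) :
    (fun α => angleCub x u (Fin.snoc α false)) = angleCub x (Fin.init u) := by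
  ext α
  simp [angleCub, Fin.sum_univ_castSucc, decide_eq_castSucc_eq_snoc, decide_eq_last_eq_snoc,
    Fin.forall_fin_succ', Fin.snoc_inj, Fin.init]

theorem angleCub_restrict_snoc_true (x : X) (u : Fin (k + 1) → X) :
    (fun α => angleCub x u (Fin.snoc α true)) = Pi.single (fun _ => false) (u (Fin.last k)) := by
  ext α
  simp [angleCub, Fin.sum_univ_castSucc, decide_eq_castSucc_eq_snoc, decide_eq_last_eq_snoc,
    Fin.forall_fin_succ', Fin.snoc_inj, Pi.single_apply]

theorem angleCub_eq_single_add (x : X) (u : Fin k → X) :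
    angleCub x u = Pi.single (fun _ => false) x + angleCub 0 u := by
  ext α
  simp [angleCub, Pi.single_apply, funext_iff]

end AngleCub

section TangentMap

variable {X Y : Type*} [NormedAddCommGroup X] [NormedSpace ℝ X]
  [NormedAddCommGroup Y] [NormedSpace ℝ Y]

theorem ContDiff.pairCub {E : Type*} [NormedAddCommGroup E] [NormedSpace ℝ E] {k : ℕ}
    {n : WithTop ℕ∞} {g h : E → (Fin k → Bool) → X} (hg : ContDiff ℝ n g) (hh : ContDiff ℝ n h) :
    ContDiff ℝ n (fun w => pairCub (g w) (h w)) := by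
  refine contDiff_pi.2 fun α => ?_
  unfold _root_.pairCub
  split_ifs
  exacts [contDiff_pi.1 hh _, contDiff_pi.1 hg _]

theorem contDiff_restrict_snoc {k : ℕ} {n : WithTop ℕ∞} (b : Bool) :
    ContDiff ℝ n (fun (w : (Fin (k + 1) → Bool) → X) (α : Fin k → Bool) => w (Fin.snoc α b)) :=
  contDiff_pi.2 fun _ => contDiff_apply _ _ _

theorem contDiff_Tsm (k : ℕ) {n : WithTop ℕ∞} {f : X → Y} (hf : ContDiff ℝ (n + k) f) :
    ContDiff ℝ n (Tsm k f) := by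
  induction k generalizing n with
  | zero =>
    have hf : ContDiff ℝ n f := by simpa using hf
    exact contDiff_pi.2 fun α => hf.comp (contDiff_apply _ _ α)
  | succ k ih =>
    have hT : ContDiff ℝ (n + 1) (Tsm k f) :=
      ih (by rwa [add_right_comm, add_assoc, ← Nat.cast_succ])
    exact (hT.of_le le_self_add).comp (contDiff_restrict_snoc false) |>.pairCub <|
      ((hT.fderiv_right le_rfl).comp (contDiff_restrict_snoc false)).clm_apply
        (contDiff_restrict_snoc true)

theorem hasFDerivAt_angleCub {k : ℕ} (x : X) (u : Fin k → X) :
    HasFDerivAt (fun y => angleCub y u)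
      (ContinuousLinearMap.single ℝ (fun _ => X) (fun _ => false)) x := by
  have h : (fun y => angleCub y u) = fun y => angleCub 0 u + Pi.single (fun _ => false) y := by
    ext1 y
    rw [angleCub_eq_single_add y u, add_comm]
  rw [h]
  exact (ContinuousLinearMap.single ℝ (fun _ => X) _).hasFDerivAt.const_add _

theorem fderiv_apply_comp_angleCub {k : ℕ} {F : ((Fin k → Bool) → X) → (Fin k → Bool) → Y}
    {x : X} {u : Fin k → X} (hF : DifferentiableAt ℝ F (angleCub x u)) (β : Fin k → Bool)
    (v : X) :
    fderiv ℝ (fun y => F (angleCub y u) β) x v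
      = fderiv ℝ F (angleCub x u) (Pi.single (fun _ => false) v) β := by
  rw [HasFDerivAt.fderiv (f := fun y => F (angleCub y u) β)
    (hasFDerivAt_pi'.1 (hF.hasFDerivAt.comp x (hasFDerivAt_angleCub x u)) β)]
  rfl

theorem Tsm_succ_angleCub (k : ℕ) (f : X → Y) (x : X) (u : Fin (k + 1) → X) :
    Tsm (k + 1) f (angleCub x u) =
      pairCub (Tsm k f (angleCub x (Fin.init u))) (fderiv ℝ (Tsm k f) (angleCub x (Fin.init u))
        (Pi.single (fun _ => false) (u (Fin.last k)))) := by
  rw [Tsm]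
  beta_reduce
  rw [angleCub_restrict_snoc_false, angleCub_restrict_snoc_true]

end TangentMap

theorem Tsm_angle_general {X Y : Type*}
    [NormedAddCommGroup X] [NormedSpace ℝ X]
    [NormedAddCommGroup Y] [NormedSpace ℝ Y]
    (k : ℕ) (f : X → Y) (hf : ContDiff ℝ (k : ℕ∞) f)
    (x : X) (u : Fin k → X) (α : Fin k → Bool) :
    Tsm k f (angleCub x u) α = dIter k u α f x := by
  induction k generalizing f x with
  | zero => simp [Tsm, dIter, angleCub]
  | succ k ih =>
    have hf' : ContDiff ℝ k f := hf.of_le (by norm_cast; omega)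
    have ih' (β : Fin k → Bool) : (fun y => Tsm k f (angleCub y (Fin.init u)) β)
        = dIter k (Fin.init u) β f := funext fun y => ih _ hf' y (Fin.init u) β
    rw [Tsm_succ_angleCub, dIter_succ_last, pairCub]
    split_ifs
    · have hT : DifferentiableAt ℝ (Tsm k f) (angleCub x (Fin.init u)) :=
        (contDiff_Tsm k (n := 1) (by simpa [add_comm] using hf)).differentiable one_ne_zero _
      rw [← fderiv_apply_comp_angleCub hT, ih']
      exact congrFun (dirDeriv_dIter k _ _ (by simpa using hf) _) x
    · exact ih _ hf' x (Fin.init u) _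

/-- Components of the smooth iterated tangent map: if `f` is `C^k`, the component of
`T^k(f)(⟨⟨x; u⟩⟩)` at the multi-index `α ∈ {0,1}^k` equals `D_u^α f(x)`. -/
theorem Tsm_angle {X Y : Type*}
    [NormedAddCommGroup X] [NormedSpace ℝ X] [FiniteDimensional ℝ X]
    [NormedAddCommGroup Y] [NormedSpace ℝ Y] [FiniteDimensional ℝ Y]
    (k : ℕ) (f : X → Y) (hf : ContDiff ℝ (k : ℕ∞) f)
    (x : X) (u : Fin k → X) (α : Fin k → Bool) :
    Tsm k f (angleCub x u) α = dIter k u α f x :=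
  Tsm_angle_general k f hf x u α
end
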